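/- arXiv:2511.11271 — 8 statements merged into one kernel-verified Lean document; each statement's English description precedes it below -/
import Mathlib

section
/- Every nondegenerate Peano continuum whose set of cut points is dense has a nonempty set of endpoints. -/
open Set Metric Filter Topology

/-- `x` is a cut point of `X` if `X \ {x}` is disconnected. -/
def IsCutPoint {X : Type*} [TopologicalSpace X] (x : X) : Prop :=
  ¬ IsPreconnected ({x}ᶜ : Set X)

/-- `x` is an endpoint if it has a neighborhood basis of sets whose boundaries
consist of at most one point. -/
def IsEndpoint {X : Type*} [TopologicalSpace X] (x : X) : Prop :=
  ∀ U ∈ 𝓝 x, ∃ V ∈ 𝓝 x, V ⊆ U ∧ (frontier V).Subsingleton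

section Aux
variable {X : Type*} [TopologicalSpace X]

lemma cross_frontier {s t : Set X} (hs : IsPreconnected s) (h1 : (s ∩ t).Nonempty)
    (h2 : (s \ t).Nonempty) : (s ∩ frontier t).Nonempty := by
  by_contra hne
  have hnf : ∀ z ∈ s, z ∉ frontier t := fun z hz hzf => hne ⟨z, hz, hzf⟩
  have hsub : s ⊆ interior t ∪ (closure t)ᶜ := by
    intro z hz
    by_cases hc : z ∈ closure t
    · left
      have := hnf z hz
      rw [frontier, mem_diff] at this
      push_neg at this
      exact this hc
    · exact Or.inr hc
  have h1' : (s ∩ interior t).Nonempty := by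
    obtain ⟨w, hws, hwt⟩ := h1
    have hwc : w ∈ closure t := subset_closure hwt
    have := hnf w hws
    rw [frontier, mem_diff] at this
    push_neg at this
    exact ⟨w, hws, this hwc⟩
  have h2' : (s ∩ (closure t)ᶜ).Nonempty := by
    obtain ⟨w, hws, hwt⟩ := h2
    refine ⟨w, hws, fun hwc => ?_⟩
    exact hnf w hws ⟨hwc, fun hwi => hwt (interior_subset hwi)⟩
  obtain ⟨z, _, hz1, hz2⟩ := hs (interior t) (closure t)ᶜ isOpen_interior
    isClosed_closure.isOpen_compl hsub h1' h2'
  exact hz2 (subset_closure (interior_subset hz1))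

lemma subset_interior_of_preconnected {s K : Set X} (hs : IsPreconnected s) (hK : IsClosed K)
    (h1 : (s ∩ interior K).Nonempty) (h2 : ∀ z ∈ s, z ∉ frontier K) : s ⊆ interior K := by
  by_contra hns
  obtain ⟨z, hzs, hzi⟩ := not_subset.mp hns
  have hzK : z ∉ K := by
    intro hzK
    exact h2 z hzs (by rw [hK.frontier_eq]; exact ⟨hzK, hzi⟩)
  obtain ⟨w, hws, hwf⟩ := cross_frontier hs
    ⟨h1.choose, h1.choose_spec.1, interior_subset h1.choose_spec.2⟩ ⟨z, hzs, hzK⟩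
  exact h2 w hws hwf

lemma half_preconnected [PreconnectedSpace X] {x : X} {A B : Set X} (hA : IsOpen A)
    (hB : IsOpen B) (hAB : A ∩ B = ∅) (hxA : x ∉ A) (_hxB : x ∉ B)
    (hcover : A ∪ B = {x}ᶜ) : IsPreconnected (A ∪ {x}) := by
  have hdecomp : ∀ z : X, z = x ∨ z ∈ A ∨ z ∈ B := by
    intro z
    by_cases hz : z = x
    · exact Or.inl hz
    · right
      have : z ∈ ({x}ᶜ : Set X) := hz
      rw [← hcover] at this
      exact this
  have key : ∀ P Q : Set X, IsOpen P → IsOpen Q → (A ∪ {x}) ⊆ P ∪ Q → x ∈ P →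
      ((A ∪ {x}) ∩ Q).Nonempty → ((A ∪ {x}) ∩ (P ∩ Q)).Nonempty := by
    intro P Q hP hQ hcov hxP ⟨y, hys, hyQ⟩
    by_contra hne
    have hxQ : x ∉ Q := fun hxQ => hne ⟨x, Or.inr rfl, hxP, hxQ⟩
    have hyx : y ≠ x := fun he => hxQ (he ▸ hyQ)
    have hyA : y ∈ A := hys.resolve_right hyx
    have hD : IsClopen (A ∩ Q) := by
      constructor
      · rw [← isOpen_compl_iff]
        have : (A ∩ Q)ᶜ = P ∪ B := by
          ext z
          constructor
          · intro hz
            rcases hdecomp z with hz1 | hz1 | hz1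
            · exact Or.inl (hz1 ▸ hxP)
            · have hzPQ : z ∈ P ∪ Q := hcov (Or.inl hz1)
              rcases hzPQ with h | h
              · exact Or.inl h
              · exact absurd ⟨hz1, h⟩ hz
            · exact Or.inr hz1
          · rintro (hz | hz) ⟨hzA, hzQ⟩
            · exact hne ⟨z, Or.inl hzA, hz, hzQ⟩
            · have : z ∈ A ∩ B := ⟨hzA, hz⟩
              rw [hAB] at this
              exact this.elim
        rw [this]
        exact hP.union hB
      · exact hA.inter hQ
    rcases isClopen_iff.mp hD with he | he
    · have : y ∈ A ∩ Q := ⟨hyA, hyQ⟩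
      rw [he] at this
      exact this.elim
    · have : x ∈ A ∩ Q := by rw [he]; trivial
      exact hxA this.1
  intro P Q hP hQ hcov hPne hQne
  rcases hcov (Or.inr rfl : x ∈ A ∪ {x}) with hxP | hxQ
  · exact key P Q hP hQ hcov hxP hQne
  · obtain ⟨z, hz1, hz2⟩ := key Q P hQ hP (hcov.trans (union_comm P Q).subset) hxQ hPne
    exact ⟨z, hz1, hz2.2, hz2.1⟩

lemma cutpoint_branches [T1Space X] [PreconnectedSpace X] {x : X} (hx : IsCutPoint x) :
    ∃ A B : Set X, IsOpen A ∧ IsOpen B ∧ A.Nonempty ∧ B.Nonempty ∧ A ∩ B = ∅ ∧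
      x ∉ A ∧ x ∉ B ∧ A ∪ B = {x}ᶜ ∧ IsPreconnected (A ∪ {x}) ∧ IsPreconnected (B ∪ {x}) := by
  rw [IsCutPoint, IsPreconnected] at hx
  push_neg at hx
  obtain ⟨u, v, hu, hv, hcov, hne1, hne2, hdis⟩ := hx
  set A : Set X := {x}ᶜ ∩ u with hA
  set B : Set X := {x}ᶜ ∩ v with hB
  have hAopen : IsOpen A := isOpen_compl_singleton.inter hu
  have hBopen : IsOpen B := isOpen_compl_singleton.inter hv
  have hABdis : A ∩ B = ∅ := by
    ext z
    simp only [mem_inter_iff, mem_empty_iff_false, iff_false]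
    rintro ⟨⟨hz1, hz2⟩, ⟨_, hz3⟩⟩
    have : z ∈ ({x}ᶜ : Set X) ∩ (u ∩ v) := ⟨hz1, hz2, hz3⟩
    rw [hdis] at this
    exact this
  have hxA : x ∉ A := fun hz => hz.1 rfl
  have hxB : x ∉ B := fun hz => hz.1 rfl
  have hABcov : A ∪ B = {x}ᶜ := by
    apply subset_antisymm
    · rintro z (hz | hz) <;> exact hz.1
    · intro z hz
      rcases hcov hz with h | h
      · exact Or.inl ⟨hz, h⟩
      · exact Or.inr ⟨hz, h⟩
  refine ⟨A, B, hAopen, hBopen, hne1, hne2, hABdis, hxA, hxB, hABcov, ?_, ?_⟩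
  · exact half_preconnected hAopen hBopen hABdis hxA hxB hABcov
  · exact half_preconnected hBopen hAopen (by rw [inter_comm]; exact hABdis) hxB hxA
      (by rw [union_comm]; exact hABcov)

end Aux

/-- Every nondegenerate Peano continuum whose set of cut points is dense has a
nonempty set of endpoints. -/
theorem dense_cutPoints_imp_endpoint {X : Type*} [MetricSpace X] [CompactSpace X]
    [ConnectedSpace X] [LocallyConnectedSpace X] [Nontrivial X]
    (h : Dense {x : X | IsCutPoint x}) :
    ∃ x : X, IsEndpoint x := by
  by_contra hcon
  push_neg at hcon
  classical
  set F : Set X → Prop := fun K =>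
    IsClosed K ∧ IsPreconnected K ∧ K.Nontrivial ∧ (frontier K).Subsingleton with hF
  have hFuniv : F univ := ⟨isClosed_univ, isPreconnected_univ, nontrivial_univ,
    by rw [frontier_univ]; exact subsingleton_empty⟩
  set r : {K : Set X // F K} → {K : Set X // F K} → Prop :=
    fun a b => b.1 = a.1 ∨ b.1 ⊆ interior a.1 with hr
  have rsub : ∀ {a b}, r a b → b.1 ⊆ a.1 := by
    rintro a b (he | hs)
    · exact he.subset
    · exact hs.trans interior_subset
  have rtrans : ∀ {a b c}, r a b → r b c → r a c := by
    rintro a b c hab (he | hs)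
    · rcases hab with he2 | hs2
      · exact Or.inl (he.trans he2)
      · exact Or.inr (he.subset.trans hs2)
    · rcases hab with he2 | hs2
      · exact Or.inr (he2 ▸ hs)
      · exact Or.inr (hs.trans (interior_subset.trans hs2))
  have hchain : ∀ c, IsChain r c → ∃ ub, ∀ a ∈ c, r a ub := by
    intro c hc
    by_cases hcne : c.Nonempty
    swap
    · exact ⟨⟨univ, hFuniv⟩, fun a ha => absurd ⟨a, ha⟩ hcne⟩
    haveI : Nonempty ↥c := hcne.to_subtype
    set t : ↥c → Set X := fun i => i.1.1 with ht
    have hsub2 : ∀ i j : ↥c, t i ⊆ t j ∨ t j ⊆ t i := by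
      intro i j
      rcases eq_or_ne i.1 j.1 with he | hne
      · left
        exact (congrArg Subtype.val he).subset
      · rcases hc i.2 j.2 hne with hij | hji
        · exact Or.inr (rsub hij)
        · exact Or.inl (rsub hji)
    have hd : Directed (· ⊇ ·) t := by
      intro i j
      rcases hsub2 i j with h | h
      · exact ⟨i, subset_rfl, h⟩
      · exact ⟨j, h, subset_rfl⟩
    have htn : ∀ i, (t i).Nonempty := fun i => i.1.2.2.2.1.nonempty
    have htcl : ∀ i, IsClosed (t i) := fun i => i.1.2.1
    have htc : ∀ i, IsCompact (t i) := fun i => (htcl i).isCompact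
    set C : Set X := ⋂ i, t i with hCdef
    have hCne : C.Nonempty :=
      IsCompact.nonempty_iInter_of_directed_nonempty_isCompact_isClosed t hd htn htc htcl
    have hCcl : IsClosed C := isClosed_iInter htcl
    have hCK : ∀ i : ↥c, C ⊆ t i := fun i => iInter_subset t i
    have hCconn : IsPreconnected C := by
      rw [IsPreconnected]
      by_contra hCc
      push_neg at hCc
      obtain ⟨u, v, hu, hv, hcov, hCu, hCv, hCuv⟩ := hCc
      set P : Set X := C \ v with hPdef
      set Q : Set X := C \ u with hQdef
      have hPcl : IsClosed P := hCcl.sdiff hv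
      have hQcl : IsClosed Q := hCcl.sdiff hu
      have hPQ : Disjoint P Q := by
        rw [Set.disjoint_left]
        rintro z ⟨hzC, hzv⟩ ⟨_, hzu⟩
        rcases hcov hzC with hz | hz
        · exact hzu hz
        · exact hzv hz
      have hPne : P.Nonempty := by
        obtain ⟨z, hzC, hzu⟩ := hCu
        refine ⟨z, hzC, fun hzv => ?_⟩
        have : z ∈ C ∩ (u ∩ v) := ⟨hzC, hzu, hzv⟩
        rw [hCuv] at this
        exact this
      have hQne : Q.Nonempty := by
        obtain ⟨z, hzC, hzv⟩ := hCv
        refine ⟨z, hzC, fun hzu => ?_⟩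
        have : z ∈ C ∩ (u ∩ v) := ⟨hzC, hzu, hzv⟩
        rw [hCuv] at this
        exact this
      obtain ⟨u', v', hu', hv', hPu', hQv', huv'⟩ := NormalSpace.normal P Q hPcl hQcl hPQ
      have hmem : ∀ i : ↥c, (t i \ (u' ∪ v')).Nonempty := by
        intro i
        by_contra hno
        rw [not_nonempty_iff_eq_empty, diff_eq_empty] at hno
        obtain ⟨z, _, hz1, hz2⟩ := i.1.2.2.1 u' v' hu' hv' hno
          ⟨hPne.choose, (hCK i) hPne.choose_spec.1, hPu' hPne.choose_spec⟩
          ⟨hQne.choose, (hCK i) hQne.choose_spec.1, hQv' hQne.choose_spec⟩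
        exact Set.disjoint_left.mp huv' hz1 hz2
      obtain ⟨z, hz⟩ :=
        IsCompact.nonempty_iInter_of_directed_nonempty_isCompact_isClosed
          (fun i => t i \ (u' ∪ v'))
          (fun i j => by
            obtain ⟨k, hk1, hk2⟩ := hd i j
            exact ⟨k, diff_subset_diff_left hk1, diff_subset_diff_left hk2⟩)
          hmem (fun i => ((htcl i).sdiff (hu'.union hv')).isCompact)
          (fun i => (htcl i).sdiff (hu'.union hv'))
      have hz' := mem_iInter.mp hz
      have hzC : z ∈ C := mem_iInter.mpr fun i => (hz' i).1
      have hzn : z ∉ u' ∪ v' := (hz' (Classical.arbitrary _)).2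
      rcases hcov hzC with hzu | hzv
      · have hzP : z ∈ P := ⟨hzC, fun hzv => by
          have : z ∈ C ∩ (u ∩ v) := ⟨hzC, hzu, hzv⟩
          rw [hCuv] at this
          exact this⟩
        exact hzn (Or.inl (hPu' hzP))
      · have hzQ : z ∈ Q := ⟨hzC, fun hzu => by
          have : z ∈ C ∩ (u ∩ v) := ⟨hzC, hzu, hzv⟩
          rw [hCuv] at this
          exact this⟩
        exact hzn (Or.inr (hQv' hzQ))
    have hCfr : (frontier C).Subsingleton := by
      intro a ha b hb
      by_contra hab
      have haC : a ∈ C := by rw [hCcl.frontier_eq] at ha; exact ha.1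
      have hbC : b ∈ C := by rw [hCcl.frontier_eq] at hb; exact hb.1
      have hd2 : (0:ℝ) < dist a b := dist_pos.mpr hab
      obtain ⟨W, hWa, hWpc, hWsub⟩ := (locallyConnectedSpace_iff_connected_subsets.mp
        inferInstance) a (ball a (dist a b / 2)) (ball_mem_nhds a (by linarith))
      obtain ⟨W', hW'b, hW'pc, hW'sub⟩ := (locallyConnectedSpace_iff_connected_subsets.mp
        inferInstance) b (ball b (dist a b / 2)) (ball_mem_nhds b (by linarith))
      have hWdis : Disjoint W W' :=
        (ball_disjoint_ball (by linarith)).mono hWsub hW'sub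
      have hex : ∀ x ∈ frontier C, ∀ (V : Set X), V ∈ 𝓝 x → ∃ i : ↥c, ¬ V ⊆ t i := by
        intro x hx V hV
        by_contra hno
        push_neg at hno
        have hVC : V ⊆ C := subset_iInter hno
        have : x ∈ interior C := mem_interior_iff_mem_nhds.mpr (mem_of_superset hV hVC)
        rw [hCcl.frontier_eq] at hx
        exact hx.2 this
      obtain ⟨ia, hia⟩ := hex a ha W hWa
      obtain ⟨ib, hib⟩ := hex b hb W' hW'b
      obtain ⟨k, hk1, hk2⟩ := hd ia ib
      have hWk : ¬ W ⊆ t k := fun hsub => hia (hsub.trans hk1)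
      have hW'k : ¬ W' ⊆ t k := fun hsub => hib (hsub.trans hk2)
      obtain ⟨z1, hz1W, hz1k⟩ := not_subset.mp hWk
      obtain ⟨z2, hz2W, hz2k⟩ := not_subset.mp hW'k
      obtain ⟨p, hpW, hpf⟩ := cross_frontier hWpc
        ⟨a, mem_of_mem_nhds hWa, hCK k haC⟩ ⟨z1, hz1W, hz1k⟩
      obtain ⟨p', hp'W, hp'f⟩ := cross_frontier hW'pc
        ⟨b, mem_of_mem_nhds hW'b, hCK k hbC⟩ ⟨z2, hz2W, hz2k⟩
      have hpp : p = p' := k.1.2.2.2.2 hpf hp'f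
      exact Set.disjoint_left.mp hWdis hpW (hpp ▸ hp'W)
    have hsmaller : ∀ i : ↥c, ¬ (t i ⊆ C) → ∃ j : ↥c, t j ⊆ interior (t i) := by
      intro i hi
      have hej : ∃ j : ↥c, ¬ t i ⊆ t j := by
        by_contra hno
        push_neg at hno
        exact hi (subset_iInter hno)
      obtain ⟨j, hj⟩ := hej
      have hne : i.1 ≠ j.1 := fun he => hj (congrArg Subtype.val he).subset
      rcases hc i.2 j.2 hne with hij | hji
      · rcases hij with he | hs
        · exact absurd he.symm.subset hj
        · exact ⟨j, hs⟩
      · exact absurd (rsub hji) hj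
    by_cases hCnt : C.Nontrivial
    · refine ⟨⟨C, hCcl, hCconn, hCnt, hCfr⟩, ?_⟩
      intro a ha
      by_cases hi : t (⟨a, ha⟩ : ↥c) ⊆ C
      · exact Or.inl (subset_antisymm (hCK ⟨a, ha⟩) hi)
      · obtain ⟨j, hj⟩ := hsmaller ⟨a, ha⟩ hi
        exact Or.inr ((hCK j).trans hj)
    · exfalso
      obtain ⟨q, hq⟩ := hCne
      have hCsub : C ⊆ {q} := fun z hz => (Set.not_nontrivial_iff.mp hCnt) hz hq
      apply hcon q
      intro U hU
      obtain ⟨O, hOU, hOopen, hqO⟩ := _root_.mem_nhds_iff.mp hU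
      have hexK : ∃ i : ↥c, t i ⊆ O := by
        by_contra hno
        push_neg at hno
        obtain ⟨z, hz⟩ :=
          IsCompact.nonempty_iInter_of_directed_nonempty_isCompact_isClosed
            (fun i => t i \ O)
            (fun i j => by
              obtain ⟨k, hk1, hk2⟩ := hd i j
              exact ⟨k, diff_subset_diff_left hk1, diff_subset_diff_left hk2⟩)
            (fun i => diff_nonempty.mpr (hno i))
            (fun i => ((htcl i).sdiff hOopen).isCompact)
            (fun i => (htcl i).sdiff hOopen)
        have hz' := mem_iInter.mp hz
        have hzC : z ∈ C := mem_iInter.mpr fun i => (hz' i).1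
        have : z = q := hCsub hzC
        exact (hz' (Classical.arbitrary _)).2 (this ▸ hqO)
      obtain ⟨i, hiO⟩ := hexK
      have hnsub : ¬ t i ⊆ C := by
        intro hsub
        obtain ⟨a1, ha1, b1, hb1, hab1⟩ := i.1.2.2.2.1
        exact hab1 ((hCsub (hsub ha1)).trans (hCsub (hsub hb1)).symm)
      obtain ⟨j, hj⟩ := hsmaller i hnsub
      have hqint : q ∈ interior (t i) := hj (hCK j hq)
      exact ⟨t i, mem_interior_iff_mem_nhds.mp hqint, hiO.trans hOU, i.1.2.2.2.2⟩
  obtain ⟨m, hmax⟩ := exists_maximal_of_chains_bounded hchain (fun {a b c} => rtrans)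
  obtain ⟨mcl, mconn, mnt, mfr⟩ := m.2
  have hint : (interior m.1).Nonempty := by
    obtain ⟨a, ha, b, hb, hab⟩ := mnt
    have hfr : a ∉ frontier m.1 ∨ b ∉ frontier m.1 := by
      by_contra hb2
      push_neg at hb2
      exact hab (mfr hb2.1 hb2.2)
    have hmem : ∀ z ∈ m.1, z ∉ frontier m.1 → z ∈ interior m.1 := by
      intro z hz hzf
      rw [mcl.frontier_eq] at hzf
      by_contra hzi
      exact hzf ⟨hz, hzi⟩
    rcases hfr with hf | hf
    · exact ⟨a, hmem a ha hf⟩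
    · exact ⟨b, hmem b hb hf⟩
  obtain ⟨x, hxcut, hxint⟩ := h.exists_mem_open isOpen_interior hint
  have hxfr : x ∉ frontier m.1 := by
    rw [mcl.frontier_eq]
    exact fun hf => hf.2 hxint
  obtain ⟨A, B, hAo, hBo, hAne, hBne, hABdis, hxA, hxB, hABcov, hApc, hBpc⟩ :=
    cutpoint_branches hxcut
  obtain ⟨S, T, hSne, hTne, hSo, hTo, hSTdis, hxS, hxT, hSTcov, hSpc, hSfr⟩ :
      ∃ S T : Set X, S.Nonempty ∧ T.Nonempty ∧ IsOpen S ∧ IsOpen T ∧ S ∩ T = ∅ ∧ x ∉ S ∧ x ∉ T ∧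
        S ∪ T = {x}ᶜ ∧ IsPreconnected (S ∪ {x}) ∧ ∀ z ∈ S ∪ {x}, z ∉ frontier m.1 := by
    by_cases hfa : ∀ z ∈ A ∪ {x}, z ∉ frontier m.1
    · exact ⟨A, B, hAne, hBne, hAo, hBo, hABdis, hxA, hxB, hABcov, hApc, hfa⟩
    · push_neg at hfa
      obtain ⟨p, hp1, hp2⟩ := hfa
      have hpA : p ∈ A := by
        rcases hp1 with hp | hp
        · exact hp
        · exact absurd (hp ▸ hp2) hxfr
      refine ⟨B, A, hBne, hAne, hBo, hAo, by rw [inter_comm]; exact hABdis, hxB, hxA,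
        by rw [union_comm]; exact hABcov, hBpc, ?_⟩
      rintro z (hzB | hzx) hzf
      · have : z = p := mfr hzf hp2
        have : z ∈ A ∩ B := ⟨this ▸ hpA, hzB⟩
        rw [hABdis] at this
        exact this
      · exact hxfr (hzx ▸ hzf)
  set K' : Set X := S ∪ {x} with hK'def
  have hK'cl : IsClosed K' := by
    rw [← isOpen_compl_iff]
    have : K'ᶜ = T := by
      ext z
      constructor
      · intro hz
        rw [mem_compl_iff, hK'def] at hz
        have hzx : z ≠ x := fun he => hz (Or.inr (he ▸ rfl))
        have : z ∈ S ∪ T := hSTcov.symm ▸ (hzx : z ∈ ({x}ᶜ : Set X))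
        rcases this with h' | h'
        · exact absurd (Or.inl h') hz
        · exact h'
      · intro hz
        rw [mem_compl_iff, hK'def]
        rintro (hzS | hzx)
        · have : z ∈ S ∩ T := ⟨hzS, hz⟩
          rw [hSTdis] at this
          exact this
        · exact hxT (hzx ▸ hz)
    rw [this]
    exact hTo
  have hK'sub : K' ⊆ interior m.1 :=
    subset_interior_of_preconnected hSpc mcl ⟨x, Or.inr rfl, hxint⟩ hSfr
  have hK'nt : K'.Nontrivial := by
    obtain ⟨s0, hs0⟩ := hSne
    exact ⟨s0, Or.inl hs0, x, Or.inr rfl, fun he => hxS (he ▸ hs0)⟩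
  have hK'fr : (frontier K').Subsingleton := by
    have hsub : frontier K' ⊆ {x} := by
      rw [hK'cl.frontier_eq]
      rintro z ⟨hz1, hz2⟩
      rcases hz1 with hzS | hzx
      · exact absurd (interior_maximal subset_union_left hSo hzS) hz2
      · exact hzx
    exact subsingleton_singleton.anti hsub
  have hrmK : r m ⟨K', hK'cl, hSpc, hK'nt, hK'fr⟩ := Or.inr hK'sub
  have hback := hmax _ hrmK
  have hmK : m.1 ⊆ K' := by
    rcases hback with he | hs
    · exact he.subset
    · exact hs.trans interior_subset
  have hK'eq : K' = m.1 := subset_antisymm (hK'sub.trans interior_subset) hmK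
  have hK'open : IsOpen K' := by
    have hsub : K' ⊆ interior K' := by
      rw [hK'eq] at hK'sub ⊢
      exact hK'sub
    have : interior K' = K' := subset_antisymm interior_subset hsub
    rw [← this]
    exact isOpen_interior
  have hK'univ : K' = univ := by
    rcases isClopen_iff.mp ⟨hK'cl, hK'open⟩ with he | he
    · exfalso
      have hxK : x ∈ K' := Or.inr rfl
      rw [he] at hxK
      exact hxK
    · exact he
  obtain ⟨w, hw⟩ := hTne
  have hwK : w ∈ K' := hK'univ ▸ mem_univ w
  rcases hwK with hwS | hwx
  · have : w ∈ S ∩ T := ⟨hwS, hw⟩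
    rw [hSTdis] at this
    exact this
  · exact hxT (hwx ▸ hw)
end

section
/- For every Peano continuum X and every ε > 0, there exists a finite cover F of X by Peano subcontinua such that each F in the cover equals the closure of its interior and each member has diameter less than ε. -/
open Set Metric Topology Bornology

/-- A Peano subcontinuum of `X`: a compact connected subset that is locally
connected in the subspace topology. -/
def IsPeanoSubcontinuum {X : Type*} [MetricSpace X] (A : Set X) : Prop :=
  IsCompact A ∧ IsConnected A ∧ LocallyConnectedSpace ↥A

/-!
Choose finite covers `𝒰 n` of `X` by open connected sets of diameter at most `c / 2 ^ n`.
Starting from a point `x`, keep adjoining the members of the next cover that meet what has been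
built so far; the union `V` is open, connected and lies within `2 c` of `x`. Past stage `K` the
construction splits into finitely many copies started from single members of `𝒰 K`, each of
diameter `O(c / 2 ^ K)`, so `V` has property S: it is a finite union of connected sets of
arbitrarily small diameter. Property S passes to `closure V` and forces local connectedness, so
`closure V` is a Peano continuum that is the closure of an open set, and finitely many of these
cover `X`.
-/

section

variable {X : Type*}

def coverStar (𝒰 : Set (Set X)) (A : Set X) : Set X :=
  ⋃₀ {P ∈ 𝒰 | (P ∩ A).Nonempty}

def iterStar (𝒰 : ℕ → Set (Set X)) (A : Set X) : ℕ → Set X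
  | 0 => A
  | n + 1 => coverStar (𝒰 n) (iterStar 𝒰 A n)

def starHull (𝒰 : ℕ → Set (Set X)) (A : Set X) : Set X :=
  ⋃ n, iterStar 𝒰 A n

/-- Sierpiński's property S. -/
def HasPropertyS [PseudoMetricSpace X] (A : Set X) : Prop :=
  ∀ δ > 0, ∃ 𝒞 : Set (Set X), 𝒞.Finite ∧ ⋃₀ 𝒞 = A ∧
    ∀ P ∈ 𝒞, IsPreconnected P ∧ IsBounded P ∧ diam P ≤ δ

section coverStar

variable {𝒰 : Set (Set X)} {A : Set X}

lemma subset_coverStar (h𝒰 : ⋃₀ 𝒰 = univ) : A ⊆ coverStar 𝒰 A := by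
  intro y hy
  obtain ⟨P, hP, hyP⟩ := mem_sUnion.mp (h𝒰 ▸ mem_univ y)
  exact ⟨P, ⟨hP, y, hyP, hy⟩, hyP⟩

lemma coverStar_iUnion {ι : Sort*} (A : ι → Set X) :
    coverStar 𝒰 (⋃ i, A i) = ⋃ i, coverStar 𝒰 (A i) := by
  ext y
  simp only [coverStar, mem_sUnion, mem_iUnion, inter_iUnion, nonempty_iUnion]
  constructor
  · rintro ⟨P, ⟨hP, i, hi⟩, hyP⟩
    exact ⟨i, P, ⟨hP, hi⟩, hyP⟩
  · rintro ⟨i, P, ⟨hP, hi⟩, hyP⟩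
    exact ⟨P, ⟨hP, i, hi⟩, hyP⟩

lemma isOpen_coverStar [TopologicalSpace X] (h𝒰 : ∀ P ∈ 𝒰, IsOpen P) :
    IsOpen (coverStar 𝒰 A) :=
  isOpen_sUnion fun P hP => h𝒰 P hP.1

lemma isPreconnected_coverStar [TopologicalSpace X] (hA : IsPreconnected A)
    (hA' : A.Nonempty) (h𝒰 : ⋃₀ 𝒰 = univ) (hP : ∀ P ∈ 𝒰, IsPreconnected P) :
    IsPreconnected (coverStar 𝒰 A) := by
  obtain ⟨a, ha⟩ := hA'
  refine isPreconnected_of_forall a fun y ⟨P, hPsel, hyP⟩ => ⟨P ∪ A, ?_, Or.inr ha, Or.inl hyP,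
    (hP P hPsel.1).union' hPsel.2 hA⟩
  exact union_subset (subset_sUnion_of_mem hPsel) (subset_coverStar h𝒰)

lemma coverStar_subset_closedBall [PseudoMetricSpace X] {x : X} {R d : ℝ}
    (hA : A ⊆ closedBall x R) (h𝒰 : ∀ P ∈ 𝒰, IsBounded P ∧ diam P ≤ d) :
    coverStar 𝒰 A ⊆ closedBall x (R + d) := by
  rintro y ⟨P, ⟨hP, z, hzP, hzA⟩, hyP⟩
  calc dist y x ≤ dist y z + dist z x := dist_triangle y z x
    _ ≤ d + R := add_le_add
        ((dist_le_diam_of_mem (h𝒰 P hP).1 hyP hzP).trans (h𝒰 P hP).2) (hA hzA)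
    _ = R + d := add_comm d R

end coverStar

section starHull

variable {𝒰 : ℕ → Set (Set X)} {A : Set X}

lemma monotone_iterStar (h𝒰 : ∀ n, ⋃₀ 𝒰 n = univ) : Monotone (iterStar 𝒰 A) :=
  monotone_nat_of_le_succ fun n => subset_coverStar (h𝒰 n)

lemma iterStar_add (N m : ℕ) :
    iterStar 𝒰 A (N + m) = iterStar (fun k => 𝒰 (N + k)) (iterStar 𝒰 A N) m := by
  induction m with
  | zero => rfl
  | succ m ih => exact congrArg (coverStar (𝒰 (N + m))) ih

lemma iterStar_iUnion {ι : Sort*} (A : ι → Set X) (n : ℕ) :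
    iterStar 𝒰 (⋃ i, A i) n = ⋃ i, iterStar 𝒰 (A i) n := by
  induction n with
  | zero => rfl
  | succ n ih => exact (congrArg (coverStar (𝒰 n)) ih).trans (coverStar_iUnion _)

lemma isPreconnected_iterStar [TopologicalSpace X] (hA : IsPreconnected A) (hA' : A.Nonempty)
    (h𝒰 : ∀ n, ⋃₀ 𝒰 n = univ) (hP : ∀ n, ∀ P ∈ 𝒰 n, IsPreconnected P) (n : ℕ) :
    IsPreconnected (iterStar 𝒰 A n) := by
  induction n with
  | zero => exact hA
  | succ n ih =>
    exact isPreconnected_coverStar ih (hA'.mono (monotone_iterStar h𝒰 n.zero_le)) (h𝒰 n) (hP n)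

lemma iterStar_subset_closedBall [PseudoMetricSpace X] {x : X} {R c : ℝ}
    (hA : A ⊆ closedBall x R) (h𝒰 : ∀ n, ∀ P ∈ 𝒰 n, IsBounded P ∧ diam P ≤ c / 2 ^ n)
    (n : ℕ) : iterStar 𝒰 A n ⊆ closedBall x (R + 2 * c - 2 * c / 2 ^ n) := by
  induction n with
  | zero => simpa [iterStar] using hA
  | succ n ih =>
    refine (coverStar_subset_closedBall ih (h𝒰 n)).trans
      (closedBall_subset_closedBall (le_of_eq ?_))
    rw [pow_succ]
    ring

lemma starHull_subset_closedBall [PseudoMetricSpace X] {x : X} {R c : ℝ} (hc : 0 ≤ c)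
    (hA : A ⊆ closedBall x R) (h𝒰 : ∀ n, ∀ P ∈ 𝒰 n, IsBounded P ∧ diam P ≤ c / 2 ^ n) :
    starHull 𝒰 A ⊆ closedBall x (R + 2 * c) :=
  iUnion_subset fun n => (iterStar_subset_closedBall hA h𝒰 n).trans
    (closedBall_subset_closedBall (sub_le_self _ (by positivity)))

lemma starHull_eq_starHull_iterStar (h𝒰 : ∀ n, ⋃₀ 𝒰 n = univ) (N : ℕ) :
    starHull 𝒰 A = starHull (fun k => 𝒰 (N + k)) (iterStar 𝒰 A N) := by
  simp_rw [starHull, ← iterStar_add, add_comm N]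
  exact ((monotone_iterStar h𝒰).iSup_nat_add N).symm

lemma starHull_iUnion {ι : Sort*} (A : ι → Set X) :
    starHull 𝒰 (⋃ i, A i) = ⋃ i, starHull 𝒰 (A i) := by
  simp only [starHull, iterStar_iUnion]
  exact iUnion_comm _

lemma isOpen_starHull [TopologicalSpace X] (h𝒰 : ∀ n, ⋃₀ 𝒰 n = univ)
    (hopen : ∀ n, ∀ P ∈ 𝒰 n, IsOpen P) : IsOpen (starHull 𝒰 A) := by
  have hshift : ⋃ n, iterStar 𝒰 A (n + 1) = ⋃ n, iterStar 𝒰 A n :=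
    (monotone_iterStar h𝒰).iSup_nat_add 1
  rw [starHull, ← hshift]
  exact isOpen_iUnion fun n => isOpen_coverStar (hopen n)

lemma isPreconnected_starHull [TopologicalSpace X] (hA : IsPreconnected A) (hA' : A.Nonempty)
    (h𝒰 : ∀ n, ⋃₀ 𝒰 n = univ) (hP : ∀ n, ∀ P ∈ 𝒰 n, IsPreconnected P) :
    IsPreconnected (starHull 𝒰 A) := by
  obtain ⟨a, ha⟩ := hA'
  exact isPreconnected_iUnion ⟨a, mem_iInter.mpr fun n => monotone_iterStar h𝒰 n.zero_le ha⟩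
    (isPreconnected_iterStar hA ⟨a, ha⟩ h𝒰 hP)

end starHull

section PropertyS

variable [PseudoMetricSpace X] {A : Set X}

lemma HasPropertyS.closure (h : HasPropertyS A) : HasPropertyS (closure A) := by
  intro δ hδ
  obtain ⟨𝒞, hfin, hA, h𝒞⟩ := h δ hδ
  refine ⟨_root_.closure '' 𝒞, hfin.image _, ?_, ?_⟩
  · rw [sUnion_image, ← hfin.closure_sUnion, hA]
  · rintro _ ⟨P, hP, rfl⟩
    obtain ⟨hconn, hbdd, hdiam⟩ := h𝒞 P hP
    exact ⟨hconn.closure, hbdd.closure, (diam_closure P).le.trans hdiam⟩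

lemma HasPropertyS.univ_subtype (h : HasPropertyS A) : HasPropertyS (univ : Set A) := by
  intro δ hδ
  obtain ⟨𝒞, hfin, hA, h𝒞⟩ := h δ hδ
  refine ⟨preimage Subtype.val '' 𝒞, hfin.image _, ?_, ?_⟩
  · rw [sUnion_image, ← preimage_iUnion₂, ← sUnion_eq_biUnion, hA, Subtype.coe_preimage_self]
  · rintro _ ⟨P, hP, rfl⟩
    obtain ⟨hconn, hbdd, hdiam⟩ := h𝒞 P hP
    have himage : Subtype.val '' (Subtype.val ⁻¹' P : Set A) = P := by
      rw [Subtype.image_preimage_coe, inter_eq_right.mpr (hA ▸ subset_sUnion_of_mem hP)]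
    refine ⟨IsInducing.subtypeVal.isPreconnected_image.mp (by rwa [himage]),
      isometry_subtype_coe.antilipschitz.isBounded_preimage hbdd, ?_⟩
    rw [← isometry_subtype_coe.diam_image, himage]
    exact hdiam

lemma locallyConnectedSpace_of_hasPropertyS_univ (h : HasPropertyS (univ : Set X)) :
    LocallyConnectedSpace X := by
  refine locallyConnectedSpace_iff_connected_subsets.mpr fun x U hU => ?_
  obtain ⟨r, hr, hxU⟩ := Metric.mem_nhds_iff.mp hU
  obtain ⟨𝒞, hfin, hcov, h𝒞⟩ := h (r / 2) (half_pos hr)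
  have hfar : IsClosed (⋃ P ∈ {P ∈ 𝒞 | x ∉ closure P}, closure P) :=
    (hfin.subset (sep_subset _ _)).isClosed_biUnion fun _ _ => isClosed_closure
  refine ⟨⋃ P ∈ {P ∈ 𝒞 | x ∈ closure P}, closure P, ?_, ?_, ?_⟩
  · refine Filter.mem_of_superset (hfar.isOpen_compl.mem_nhds ?_) fun y hy => ?_
    · intro hx
      obtain ⟨P, hP, hxP⟩ := mem_iUnion₂.mp hx
      exact hP.2 hxP
    · obtain ⟨P, hP, hyP⟩ := mem_sUnion.mp (hcov ▸ mem_univ y)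
      by_cases hxP : x ∈ closure P
      · exact mem_biUnion ⟨hP, hxP⟩ (subset_closure hyP)
      · exact absurd (mem_biUnion (show P ∈ {P ∈ 𝒞 | x ∉ closure P} from ⟨hP, hxP⟩)
          (subset_closure hyP)) hy
  · rw [← sUnion_image]
    refine isPreconnected_sUnion x _ ?_ ?_
    · rintro _ ⟨P, ⟨-, hxP⟩, rfl⟩
      exact hxP
    · rintro _ ⟨P, ⟨hP, -⟩, rfl⟩
      exact (h𝒞 P hP).1.closure
  · refine iUnion₂_subset fun P ⟨hP, hxP⟩ y hyP => hxU (mem_ball.mpr ?_)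
    calc dist y x ≤ diam (closure P) := dist_le_diam_of_mem (h𝒞 P hP).2.1.closure hyP hxP
      _ = diam P := diam_closure P
      _ ≤ r / 2 := (h𝒞 P hP).2.2
      _ < r := half_lt_self hr

lemma HasPropertyS.locallyConnectedSpace (h : HasPropertyS A) : LocallyConnectedSpace A :=
  locallyConnectedSpace_of_hasPropertyS_univ h.univ_subtype

end PropertyS

lemma hasPropertyS_starHull [PseudoMetricSpace X] {𝒰 : ℕ → Set (Set X)} {c : ℝ} (hc : 0 ≤ c)
    (h𝒰 : ∀ n, ⋃₀ 𝒰 n = univ) (hfin : ∀ n, (𝒰 n).Finite)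
    (hconn : ∀ n, ∀ P ∈ 𝒰 n, IsPreconnected P)
    (hmesh : ∀ n, ∀ P ∈ 𝒰 n, IsBounded P ∧ diam P ≤ c / 2 ^ n) (A : Set X) :
    HasPropertyS (starHull 𝒰 A) := by
  intro δ hδ
  obtain ⟨K, hK⟩ := pow_unbounded_of_one_lt (4 * c / δ) (one_lt_two (α := ℝ))
  set sel := {U ∈ 𝒰 K | (U ∩ iterStar 𝒰 A K).Nonempty}
  set 𝒰' : ℕ → Set (Set X) := fun k => 𝒰 (K + 1 + k)
  -- From stage `K + 1` on, the hull grows independently from each member of `sel`.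
  have hsplit : starHull 𝒰 A = ⋃ U ∈ sel, starHull 𝒰' U := by
    rw [starHull_eq_starHull_iterStar h𝒰 (K + 1)]
    change starHull 𝒰' (⋃₀ sel) = _
    simp only [sUnion_eq_biUnion, starHull_iUnion]
  refine ⟨starHull 𝒰' '' sel, ((hfin K).subset (sep_subset _ _)).image _,
    by rw [sUnion_image, hsplit], ?_⟩
  rintro _ ⟨U, ⟨hU, u, hu, -⟩, rfl⟩
  have hmesh' : ∀ k, ∀ P ∈ 𝒰' k, IsBounded P ∧ diam P ≤ c / 2 ^ (K + 1) / 2 ^ k := by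
    intro k P hP
    simpa only [pow_add, div_div] using hmesh (K + 1 + k) P hP
  have hball : starHull 𝒰' U ⊆ closedBall u (2 * (c / 2 ^ K)) := by
    have hU : U ⊆ closedBall u (c / 2 ^ K) := fun y hy =>
      (dist_le_diam_of_mem (hmesh K U hU).1 hy hu).trans (hmesh K U hU).2
    convert starHull_subset_closedBall (by positivity) hU hmesh' using 2
    rw [pow_succ]
    ring
  refine ⟨isPreconnected_starHull (hconn K U hU) ⟨u, hu⟩ (fun _ => h𝒰 _) (fun _ => hconn _),
    isBounded_closedBall.subset hball, ?_⟩
  calc diam (starHull 𝒰' U) ≤ 2 * (2 * (c / 2 ^ K)) :=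
        (diam_mono hball isBounded_closedBall).trans (diam_closedBall (by positivity))
    _ = 4 * c / 2 ^ K := by ring
    _ ≤ δ := by
        rw [div_lt_iff₀ hδ] at hK
        rw [div_le_iff₀ (by positivity)]
        linarith

lemma exists_finite_open_preconnected_cover [PseudoMetricSpace X] [CompactSpace X]
    [LocallyConnectedSpace X] {r : ℝ} (hr : 0 < r) :
    ∃ 𝒰 : Set (Set X), 𝒰.Finite ∧ ⋃₀ 𝒰 = univ ∧
      ∀ P ∈ 𝒰, IsOpen P ∧ IsPreconnected P ∧ IsBounded P ∧ diam P ≤ r := by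
  choose V hVball hVopen hxV hVconn using fun x : X =>
    locallyConnectedSpace_iff_subsets_isOpen_isConnected.mp ‹_› x (ball x (r / 2))
      (ball_mem_nhds x (half_pos hr))
  obtain ⟨t, ht⟩ := CompactSpace.elim_nhds_subcover V fun x => (hVopen x).mem_nhds (hxV x)
  refine ⟨V '' t, t.finite_toSet.image V, by rw [sUnion_image]; exact ht, ?_⟩
  rintro _ ⟨x, -, rfl⟩
  refine ⟨hVopen x, (hVconn x).isPreconnected, isBounded_ball.subset (hVball x), ?_⟩
  calc diam (V x) ≤ diam (ball x (r / 2)) := diam_mono (hVball x) isBounded_ball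
    _ ≤ 2 * (r / 2) := diam_ball (half_pos hr).le
    _ = r := by ring

lemma exists_isOpen_isPreconnected_hasPropertyS_subset_closedBall [PseudoMetricSpace X]
    [CompactSpace X] [LocallyConnectedSpace X] (x : X) {r : ℝ} (hr : 0 < r) :
    ∃ V : Set X, IsOpen V ∧ x ∈ V ∧ IsPreconnected V ∧ HasPropertyS V ∧
      V ⊆ closedBall x r := by
  choose 𝒰 hfin hcov h𝒰 using fun n : ℕ =>
    exists_finite_open_preconnected_cover (X := X) (r := r / 2 / 2 ^ n) (by positivity)
  have hconn n P hP : IsPreconnected P := (h𝒰 n P hP).2.1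
  refine ⟨starHull 𝒰 {x}, isOpen_starHull hcov fun n P hP => (h𝒰 n P hP).1,
    mem_iUnion.mpr ⟨0, rfl⟩,
    isPreconnected_starHull isPreconnected_singleton (singleton_nonempty x) hcov hconn,
    hasPropertyS_starHull (half_pos hr).le hcov hfin hconn (fun n P hP => (h𝒰 n P hP).2.2) _,
    ?_⟩
  convert starHull_subset_closedBall (half_pos hr).le
    (singleton_subset_iff.mpr (mem_closedBall_self le_rfl)) (fun n P hP => (h𝒰 n P hP).2.2)
    using 2
  ring

end

theorem fine_covers_by_peano_subcontinua_general {X : Type*} [MetricSpace X] [CompactSpace X]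
    [LocallyConnectedSpace X] (ε : ℝ) (hε : 0 < ε) :
    ∃ F : Finset (Set X), ⋃₀ (F : Set (Set X)) = univ ∧
      ∀ A ∈ F, IsPeanoSubcontinuum A ∧ A = closure (interior A) ∧ diam A < ε := by
  classical
  choose V hVopen hxV hVconn hVS hVball using fun x : X =>
    exists_isOpen_isPreconnected_hasPropertyS_subset_closedBall x (by positivity : 0 < ε / 3)
  obtain ⟨t, ht⟩ := CompactSpace.elim_nhds_subcover V fun x => (hVopen x).mem_nhds (hxV x)
  refine ⟨t.image fun x => closure (V x), ?_, ?_⟩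
  · rw [Finset.coe_image, sUnion_image]
    exact eq_univ_of_univ_subset (ht.ge.trans (iUnion₂_mono fun x _ => subset_closure))
  · simp only [Finset.mem_image]
    rintro _ ⟨x, -, rfl⟩
    refine ⟨⟨isClosed_closure.isCompact, ⟨⟨x, subset_closure (hxV x)⟩, (hVconn x).closure⟩,
      (hVS x).closure.locallyConnectedSpace⟩, ?_, ?_⟩
    · rw [← (hVopen x).interior_eq]
      exact closure_interior_idem.symm
    · calc diam (closure (V x)) = diam (V x) := diam_closure _
        _ ≤ 2 * (ε / 3) := (diam_mono (hVball x) isBounded_closedBall).trans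
            (diam_closedBall (by positivity))
        _ < ε := by linarith

/-- For every Peano continuum `X` and every `ε > 0` there is a finite cover of `X`
by Peano subcontinua, each equal to the closure of its interior and of diameter
less than `ε`. -/
theorem fine_covers_by_peano_subcontinua {X : Type*} [MetricSpace X] [CompactSpace X]
    [ConnectedSpace X] [LocallyConnectedSpace X] (ε : ℝ) (hε : 0 < ε) :
    ∃ F : Finset (Set X), ⋃₀ (F : Set (Set X)) = univ ∧
      ∀ A ∈ F, IsPeanoSubcontinuum A ∧ A = closure (interior A) ∧ diam A < ε :=
  fine_covers_by_peano_subcontinua_general ε hε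
end

section
/- Let X be a compact metric space, let x ≠ y be points of X, and let (X_n) be a sequence of infinite subsets of X. Then there exists a continuous map f : X → [0,1] such that f⁻¹(0) = {x}, f⁻¹(1) = {y}, and |f(X_n)| > 1 for every n. -/
open Set Metric Topology

set_option maxHeartbeats 1000000 in
/-- Let `X` be a compact metric space, `x ≠ y` points and `(A n)` a sequence of
infinite subsets of `X`. Then there is a continuous `f : X → [0,1]` such that
`f⁻¹(0) = {x}`, `f⁻¹(1) = {y}` and `f` is non-constant on each `A n`. -/
theorem exists_separating_function {X : Type*} [MetricSpace X] [CompactSpace X]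
    (x y : X) (hxy : x ≠ y) (A : ℕ → Set X) (hA : ∀ n, (A n).Infinite) :
    ∃ f : X → ℝ, Continuous f ∧ (∀ z, f z ∈ Icc (0 : ℝ) 1) ∧
      f ⁻¹' {0} = {x} ∧ f ⁻¹' {1} = {y} ∧ ∀ n, (f '' A n).Nontrivial := by
  classical
  -- choose two points in each `A n`, distinct from each other and from `x, y`
  have hpairs : ∀ n, ∃ q : X × X, q.1 ∈ A n ∧ q.2 ∈ A n ∧ q.1 ≠ q.2 ∧
      q.1 ∉ ({x, y} : Set X) ∧ q.2 ∉ ({x, y} : Set X) := by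
    intro n
    have h1 : ((A n) \ {x, y}).Infinite := (hA n).diff (Set.toFinite _)
    obtain ⟨a, ha, b, hb, hab⟩ := h1.nontrivial
    exact ⟨(a, b), ha.1, hb.1, hab, ha.2, hb.2⟩
  choose q hqa hqb hqne hqx hqy using hpairs
  set a : ℕ → X := fun n => (q n).1 with ha_def
  set b : ℕ → X := fun n => (q n).2 with hb_def
  -- the base function g
  have hD : ∀ z : X, 0 < dist z x + dist z y := by
    intro z
    have h1 : dist x y ≤ dist z x + dist z y := by
      rw [dist_comm z x]; exact dist_triangle x z y
    have := dist_pos.2 hxy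
    linarith
  set g : X → ℝ := fun z => dist z x / (dist z x + dist z y) with hg_def
  have hgc : Continuous g := by
    apply Continuous.div (continuous_id.dist continuous_const)
      ((continuous_id.dist continuous_const).add (continuous_id.dist continuous_const))
    exact fun z => (hD z).ne'
  have hg0 : ∀ z, 0 ≤ g z := fun z => div_nonneg dist_nonneg (hD z).le
  have hg1 : ∀ z, g z ≤ 1 := fun z =>
    (div_le_one (hD z)).2 (le_add_of_nonneg_right dist_nonneg)
  have hgx : g x = 0 := by simp [hg_def]
  have hgy : g y = 1 := by
    simp only [hg_def]
    rw [dist_self, add_zero, div_self (by simpa using (dist_pos.2 hxy.symm) : dist y x ≠ 0)]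
  have hgz0 : ∀ z, g z = 0 → z = x := by
    intro z hz
    rcases div_eq_zero_iff.1 hz with h | h
    · exact dist_eq_zero.1 h
    · exact absurd h (hD z).ne'
  have hgz1 : ∀ z, g z = 1 → z = y := by
    intro z hz
    rw [div_eq_one_iff_eq (hD z).ne'] at hz
    have : dist z y = 0 := by linarith
    exact dist_eq_zero.1 this
  -- a continuous u separating each pair, via Baire category
  obtain ⟨u, hu⟩ : ∃ u : C(X, ℝ), ∀ n, u (a n) ≠ u (b n) := by
    have hopen : ∀ n, IsOpen {u : C(X, ℝ) | u (a n) ≠ u (b n)} := by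
      intro n
      have hc : Continuous fun u : C(X, ℝ) => u (a n) - u (b n) :=
        (continuous_eval_const (a n)).sub
          (continuous_eval_const (b n))
      have : {u : C(X, ℝ) | u (a n) ≠ u (b n)}
          = (fun u : C(X, ℝ) => u (a n) - u (b n)) ⁻¹' ({0}ᶜ) := by
        ext u; simp [sub_eq_zero]
      rw [this]
      exact (isOpen_compl_singleton).preimage hc
    have hdense : ∀ n, Dense {u : C(X, ℝ) | u (a n) ≠ u (b n)} := by
      intro n
      rw [Metric.dense_iff]
      intro u ε hε
      by_cases h : u (a n) ≠ u (b n)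
      · exact ⟨u, Metric.mem_ball_self hε, h⟩
      · push_neg at h
        set φ : C(X, ℝ) := ⟨fun z => dist z (b n), continuous_id.dist continuous_const⟩
          with hφ_def
        have hφab : φ (a n) = dist (a n) (b n) := rfl
        have hφbb : φ (b n) = 0 := by simp [hφ_def]
        set c : ℝ := ε / (2 * (‖φ‖ + 1)) with hc_def
        have hden : (0:ℝ) < 2 * (‖φ‖ + 1) := by positivity
        have hc : 0 < c := div_pos hε hden
        refine ⟨u + c • φ, ?_, ?_⟩
        · rw [Metric.mem_ball, dist_eq_norm]
          have : u + c • φ - u = c • φ := by abel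
          rw [this]
          have hns : ‖c • φ‖ ≤ c * ‖φ‖ := by
            calc ‖c • φ‖ ≤ ‖c‖ * ‖φ‖ := norm_smul_le c φ
            _ = c * ‖φ‖ := by rw [Real.norm_eq_abs, abs_of_pos hc]
          have h1 : c * ‖φ‖ ≤ c * (‖φ‖ + 1) := by nlinarith [hc, norm_nonneg φ]
          have h2 : c * (‖φ‖ + 1) = ε / 2 := by
            rw [hc_def]; field_simp
          linarith
        · simp only [Set.mem_setOf_eq, ContinuousMap.add_apply, ContinuousMap.smul_apply,
            smul_eq_mul, hφab, hφbb, mul_zero, add_zero]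
          intro hcon
          have hd : dist (a n) (b n) ≠ 0 := dist_ne_zero.2 (hqne n)
          have : c * dist (a n) (b n) = 0 := by linarith [h]
          rcases mul_eq_zero.1 this with h' | h'
          · exact hc.ne' h'
          · exact hd h'
    have hd := dense_iInter_of_isOpen hopen hdense
    obtain ⟨u, hu⟩ := hd.nonempty
    exact ⟨u, fun n => Set.mem_iInter.1 hu n⟩
  -- auxiliary function G
  set G : X → ℝ := fun z => g z * (1 - g z) with hG_def
  have hGpos : ∀ z, z ∉ ({x, y} : Set X) → 0 < G z := by
    intro z hz
    simp only [Set.mem_insert_iff, Set.mem_singleton_iff, not_or] at hz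
    have h0 : g z ≠ 0 := fun h => hz.1 (hgz0 z h)
    have h1 : g z ≠ 1 := fun h => hz.2 (hgz1 z h)
    have := hg0 z; have := hg1 z
    have hgt : 0 < g z := lt_of_le_of_ne (hg0 z) (Ne.symm h0)
    have hlt : g z < 1 := lt_of_le_of_ne (hg1 z) h1
    exact mul_pos hgt (by linarith)
  -- the countable bad set of parameters
  set α : ℕ → ℝ := fun n => g (a n) - g (b n) with hα_def
  set β : ℕ → ℝ := fun n => G (a n) * u (a n) - G (b n) * u (b n) with hβ_def
  have hkey : ∀ n, ¬ (α n = 0 ∧ β n = 0) := by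
    rintro n ⟨h1, h2⟩
    have hgab : g (a n) = g (b n) := by simpa [hα_def, sub_eq_zero] using h1
    have hGab : G (a n) = G (b n) := by simp [hG_def, hgab]
    have hGa : 0 < G (a n) := hGpos _ (hqx n)
    simp only [hβ_def] at h2
    have : G (a n) * (u (a n) - u (b n)) = 0 := by
      rw [mul_sub]; rw [hGab] at h2 ⊢; linarith
    rcases mul_eq_zero.1 this with h' | h'
    · exact hGa.ne' h'
    · exact hu n (sub_eq_zero.1 h')
  set T : Set ℝ := ⋃ n, {t : ℝ | α n + t * β n = 0} with hT_def
  have hTc : T.Countable := by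
    apply Set.countable_iUnion
    intro n
    apply Set.Subsingleton.countable
    intro t₁ h₁ t₂ h₂
    simp only [Set.mem_setOf_eq] at h₁ h₂
    by_cases hβn : β n = 0
    · exact absurd ⟨by simpa [hβn] using h₁, hβn⟩ (hkey n)
    · have : (t₁ - t₂) * β n = 0 := by linear_combination h₁ - h₂
      rcases mul_eq_zero.1 this with h' | h'
      · linarith [sub_eq_zero.1 h']
      · exact absurd h' hβn
  -- pick a good parameter t
  set δ : ℝ := (2 * (‖u‖ + 1))⁻¹ with hδ_def
  have hδpos : 0 < δ := by positivity
  obtain ⟨t, htIoo, htT⟩ : ∃ t, t ∈ Ioo (0:ℝ) δ ∧ t ∉ T := by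
    by_contra h
    push_neg at h
    have hsub : Ioo (0:ℝ) δ ⊆ T := fun t ht => h t ht
    have : (Ioo (0:ℝ) δ).Countable := hTc.mono hsub
    have hz := this.measure_zero (MeasureTheory.volume)
    rw [Real.volume_Ioo] at hz
    simp only [sub_zero] at hz
    exact (ENNReal.ofReal_pos.2 hδpos).ne' hz
  have ht0 : 0 < t := htIoo.1
  have htδ : t < δ := htIoo.2
  -- the bound |t * u z| ≤ 1/2
  have htu : ∀ z, |t * u z| ≤ 1 / 2 := by
    intro z
    have h1 : |u z| ≤ ‖u‖ := by
      have := u.norm_coe_le_norm z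
      simpa [Real.norm_eq_abs] using this
    have h2 : t * (‖u‖ + 1) < δ * (‖u‖ + 1) := by
      apply mul_lt_mul_of_pos_right htδ; positivity
    have h3 : δ * (‖u‖ + 1) = 1 / 2 := by
      rw [hδ_def]
      have h0 : (‖u‖ + 1) ≠ 0 := by positivity
      field_simp
    rw [abs_mul, abs_of_pos ht0]
    have h4 : t * |u z| ≤ t * (‖u‖ + 1) := by nlinarith
    linarith
  -- the final function
  refine ⟨fun z => g z + G z * (t * u z), ?_, ?_, ?_, ?_, ?_⟩
  · exact hgc.add ((hgc.mul (continuous_const.sub hgc)).mul (continuous_const.mul u.continuous))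
  · intro z
    have hP0 := hg0 z; have hP1 := hg1 z
    have hQ := abs_le.1 (htu z)
    have hgQ : 0 ≤ 1 / 2 - g z * (t * u z) := by
      nlinarith [mul_nonneg hP0 (by linarith [hQ.2] : (0:ℝ) ≤ 1 / 2 - t * u z)]
    constructor
    · simp only [hG_def]
      nlinarith [mul_nonneg (mul_nonneg hP0 (sub_nonneg.2 hP1))
          (by linarith [hQ.1] : (0:ℝ) ≤ t * u z + 1 / 2),
        mul_nonneg hP0 hP0]
    · simp only [hG_def]
      nlinarith [mul_nonneg (sub_nonneg.2 hP1) hgQ]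
  · ext z
    simp only [Set.mem_preimage, Set.mem_singleton_iff]
    constructor
    · intro hz
      have hP0 := hg0 z; have hP1 := hg1 z
      have hQ := abs_le.1 (htu z)
      have hlow : g z / 2 ≤ g z + G z * (t * u z) := by
        simp only [hG_def]
        nlinarith [mul_nonneg (mul_nonneg hP0 (sub_nonneg.2 hP1))
            (by linarith [hQ.1] : (0:ℝ) ≤ t * u z + 1 / 2),
          mul_nonneg hP0 hP0]
      exact hgz0 z (by linarith [hlow, hz])
    · intro hz
      subst hz
      simp [hG_def, hgx]
  · ext z
    simp only [Set.mem_preimage, Set.mem_singleton_iff]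
    constructor
    · intro hz
      have hP0 := hg0 z; have hP1 := hg1 z
      have hQ := abs_le.1 (htu z)
      have hgQ : 0 ≤ 1 / 2 - g z * (t * u z) := by
        nlinarith [mul_nonneg hP0 (by linarith [hQ.2] : (0:ℝ) ≤ 1 / 2 - t * u z)]
      have hhigh : g z + G z * (t * u z) ≤ (1 + g z) / 2 := by
        simp only [hG_def]
        nlinarith [mul_nonneg (sub_nonneg.2 hP1) hgQ]
      exact hgz1 z (by linarith [hhigh, hz])
    · intro hz
      subst hz
      simp only [hG_def, hgy]
      ring
  · intro n
    refine ⟨_, ⟨a n, hqa n, rfl⟩, _, ⟨b n, hqb n, rfl⟩, ?_⟩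
    intro hcon
    apply htT
    rw [hT_def]
    apply Set.mem_iUnion.2 ⟨n, ?_⟩
    simp only [Set.mem_setOf_eq, hα_def, hβ_def]
    have h : g (a n) + G (a n) * (t * u (a n)) = g (b n) + G (b n) * (t * u (b n)) := hcon
    linear_combination h
end

section
/- For every Peano continuum X and distinct points x, y in X, there exists a continuous map f : X → [0,1] such that f⁻¹(0) = {x}, f⁻¹(1) = {y}, and the image under f of every nonempty open subset of X has nonempty interior in [0,1]. -/
open Set Metric Topology unitInterval


private noncomputable def pf0 {X : Type*} [MetricSpace X] (x y p : X) : ℝ :=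
  dist p x / (dist p x + dist p y)

private noncomputable def pF {X : Type*} [MetricSpace X] (x y : X)
    (g : C(X, unitInterval)) (p : X) : ℝ :=
  pf0 x y p + (g p : ℝ) * (pf0 x y p * (1 - pf0 x y p)) / 2

section Aux
variable {X : Type*} [MetricSpace X] {x y : X}

private lemma denom_pos (hxy : x ≠ y) (p : X) : 0 < dist p x + dist p y := by
  have h1 := dist_triangle x p y
  have h2 : (0:ℝ) < dist x y := dist_pos.2 hxy
  have h3 : dist x p = dist p x := dist_comm x p
  linarith

private lemma pf0_nonneg (hxy : x ≠ y) (p : X) : 0 ≤ pf0 x y p :=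
  div_nonneg dist_nonneg (denom_pos hxy p).le

private lemma pf0_le_one (hxy : x ≠ y) (p : X) : pf0 x y p ≤ 1 := by
  rw [pf0, div_le_one (denom_pos hxy p)]
  have := dist_nonneg (x := p) (y := y)
  linarith

private lemma pf0_eq_zero (hxy : x ≠ y) (p : X) : pf0 x y p = 0 ↔ p = x := by
  rw [pf0, div_eq_zero_iff]
  constructor
  · rintro (h | h)
    · exact dist_eq_zero.1 h
    · exact absurd h (denom_pos hxy p).ne'
  · intro h; subst h; left; simp

private lemma pf0_eq_one (hxy : x ≠ y) (p : X) : pf0 x y p = 1 ↔ p = y := by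
  rw [pf0, div_eq_one_iff_eq (denom_pos hxy p).ne']
  constructor
  · intro h
    have : dist p y = 0 := by linarith
    exact dist_eq_zero.1 this
  · intro h; subst h; simp

private lemma pf0_cont (hxy : x ≠ y) : Continuous (pf0 x y) :=
  (continuous_id.dist continuous_const).div
    ((continuous_id.dist continuous_const).add (continuous_id.dist continuous_const))
    fun p => (denom_pos hxy p).ne'

private lemma pF_cont (hxy : x ≠ y) (g : C(X, unitInterval)) : Continuous (pF x y g) := by
  have h0 := pf0_cont hxy
  exact h0.add ((((continuous_subtype_val.comp g.continuous).mul
    (h0.mul (continuous_const.sub h0))).div_const 2))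

private lemma pF_eval_cont (x y : X) (p : X) :
    Continuous fun g : C(X, unitInterval) => pF x y g p := by
  exact continuous_const.add (((continuous_subtype_val.comp
    (continuous_eval_const p)).mul continuous_const).div_const 2)

private lemma pF_mem (hxy : x ≠ y) (g : C(X, unitInterval)) (p : X) :
    pF x y g p ∈ Icc (0:ℝ) 1 := by
  have ha0 := pf0_nonneg hxy p
  have ha1 := pf0_le_one hxy p
  have hw0 : (0:ℝ) ≤ g p := unitInterval.nonneg _
  have hw1 : (g p : ℝ) ≤ 1 := unitInterval.le_one _
  constructor
  · rw [pF]; nlinarith [mul_nonneg hw0 (mul_nonneg ha0 (by linarith : (0:ℝ) ≤ 1 - pf0 x y p))]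
  · rw [pF]; nlinarith [mul_nonneg (by linarith : (0:ℝ) ≤ 1 - pf0 x y p)
      (by nlinarith : (0:ℝ) ≤ 2 - (g p : ℝ) * pf0 x y p)]

private lemma pF_eq_zero (hxy : x ≠ y) (g : C(X, unitInterval)) (p : X) :
    pF x y g p = 0 ↔ p = x := by
  have ha0 := pf0_nonneg hxy p
  have ha1 := pf0_le_one hxy p
  have hw0 : (0:ℝ) ≤ g p := unitInterval.nonneg _
  rw [← pf0_eq_zero hxy p]
  constructor
  · intro h
    have h2 : 0 ≤ (g p : ℝ) * (pf0 x y p * (1 - pf0 x y p)) / 2 := by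
      have := mul_nonneg hw0 (mul_nonneg ha0 (by linarith : (0:ℝ) ≤ 1 - pf0 x y p))
      linarith
    rw [pF] at h; linarith
  · intro h; rw [pF, h]; ring

private lemma pF_eq_one (hxy : x ≠ y) (g : C(X, unitInterval)) (p : X) :
    pF x y g p = 1 ↔ p = y := by
  have ha0 := pf0_nonneg hxy p
  have ha1 := pf0_le_one hxy p
  have hw0 : (0:ℝ) ≤ g p := unitInterval.nonneg _
  have hw1 : (g p : ℝ) ≤ 1 := unitInterval.le_one _
  rw [← pf0_eq_one hxy p]
  constructor
  · intro h
    have key : (1 - pf0 x y p) * (2 - (g p : ℝ) * pf0 x y p)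
        = 2 * (1 - pF x y g p) := by rw [pF]; ring
    rw [h] at key
    have h2 : 0 < 2 - (g p : ℝ) * pf0 x y p := by nlinarith
    have key2 : (1 - pf0 x y p) * (2 - (g p : ℝ) * pf0 x y p) = 0 := by linarith
    rcases mul_eq_zero.1 key2 with h3 | h3
    · linarith
    · linarith
  · intro h; rw [pF, h]; ring

private lemma open_infinite [ConnectedSpace X] (hxy : x ≠ y) {U : Set X}
    (hU : IsOpen U) (hne : U.Nonempty) : U.Infinite := by
  intro hfin
  obtain ⟨p, hp⟩ := hne
  have h1 : IsClosed (U \ {p}) := (hfin.subset diff_subset).isClosed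
  have h2 : IsOpen ({p} : Set X) := by
    have heq : ({p} : Set X) = U ∩ (U \ {p})ᶜ := by
      ext q
      simp only [mem_singleton_iff, mem_inter_iff, mem_compl_iff, mem_diff, not_and, not_not]
      constructor
      · rintro rfl; exact ⟨hp, fun _ => rfl⟩
      · rintro ⟨hq, h⟩; exact h hq
    rw [heq]; exact hU.inter h1.isOpen_compl
  rcases isClopen_iff.1 ⟨isClosed_singleton, h2⟩ with h | h
  · exact (singleton_nonempty p).ne_empty h
  · apply hxy
    have hx : x ∈ ({p} : Set X) := h ▸ mem_univ x
    have hy : y ∈ ({p} : Set X) := h ▸ mem_univ y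
    rw [mem_singleton_iff] at hx hy
    rw [hx, hy]

end Aux

/-- For every Peano continuum `X` and distinct `x, y ∈ X`, there is a continuous
`f : X → [0,1]` with `f⁻¹(0) = {x}`, `f⁻¹(1) = {y}`, such that the image of any
nonempty open subset of `X` has nonempty interior in `[0,1]`. -/
theorem exists_projection_with_fat_images {X : Type*} [MetricSpace X] [CompactSpace X]
    [ConnectedSpace X] [LocallyConnectedSpace X] (x y : X) (hxy : x ≠ y) :
    ∃ f : X → unitInterval, Continuous f ∧
      f ⁻¹' {0} = {x} ∧ f ⁻¹' {1} = {y} ∧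
      ∀ U : Set X, IsOpen U → U.Nonempty → (interior (f '' U)).Nonempty := by
  obtain ⟨d, hd⟩ := TopologicalSpace.exists_dense_seq X
  set ι := ℕ × {r : ℚ // 0 < r} with hι
  set V : ι → Set X := fun i => connectedComponentIn (ball (d i.1) ((i.2 : ℚ) : ℝ)) (d i.1)
    with hV
  have hVopen : ∀ i, IsOpen (V i) := fun i => isOpen_ball.connectedComponentIn
  have hVconn : ∀ i, IsPreconnected (V i) := fun i => isPreconnected_connectedComponentIn
  have hVne : ∀ i, d i.1 ∈ V i := fun i =>
    mem_connectedComponentIn (mem_ball_self (by exact_mod_cast i.2.2))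
  set G : ι → Set C(X, unitInterval) := fun i =>
    ⋃ (p) (q) (_ : p ∈ V i ∧ p ≠ x ∧ p ≠ y ∧ q ∈ V i), {g | pF x y g p ≠ pF x y g q}
    with hG
  have hGopen : ∀ i, IsOpen (G i) := fun i =>
    isOpen_iUnion fun p => isOpen_iUnion fun q => isOpen_iUnion fun _ =>
      isOpen_ne_fun (pF_eval_cont x y p) (pF_eval_cont x y q)
  have hGdense : ∀ i, Dense (G i) := by
    intro i
    rw [Metric.dense_iff]
    intro g ε hε
    have hinf : (V i).Infinite := open_infinite hxy (hVopen i) ⟨_, hVne i⟩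
    obtain ⟨p, hpV, hpxy⟩ := (hinf.diff ((Set.finite_singleton x).insert y)).nonempty
    have hpx : p ≠ x := by simp at hpxy; exact hpxy.2
    have hpy : p ≠ y := by simp at hpxy; exact hpxy.1
    obtain ⟨q, hqV, hqp'⟩ := (hinf.diff (Set.finite_singleton p)).nonempty
    have hqp : q ≠ p := by simpa using hqp'
    have hw0 : (0:ℝ) ≤ g p := unitInterval.nonneg _
    have hw1 : (g p : ℝ) ≤ 1 := unitInterval.le_one _
    set s : ℝ := min ε 1 / 2 with hs
    have hs0 : 0 < s := by
      have : 0 < min ε 1 := lt_min hε one_pos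
      positivity
    have hs2 : s ≤ 1/2 := by
      have := min_le_right ε 1; rw [hs]; linarith
    have hsε : s < ε := by
      have := min_le_left ε 1; rw [hs]; linarith
    have ha0' := pf0_nonneg hxy p
    have ha1' := pf0_le_one hxy p
    have ha0 : 0 < pf0 x y p :=
      lt_of_le_of_ne ha0' (fun h => hpx ((pf0_eq_zero hxy p).1 h.symm))
    have ha1 : pf0 x y p < 1 :=
      lt_of_le_of_ne ha1' (fun h => hpy ((pf0_eq_one hxy p).1 h))
    set cp : ℝ := pf0 x y p * (1 - pf0 x y p) / 2 with hcp
    have hcp0 : 0 < cp := by rw [hcp]; nlinarith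
    have main : ∀ t : ℝ, |t| ≤ s → 0 ≤ (g p : ℝ) + t → (g p : ℝ) + t ≤ 1 →
        pF x y g p + t * cp ≠ pF x y g q → (ball g ε ∩ G i).Nonempty := by
      intro t ht hb1' hb2' hneq
      have hdq : (0:ℝ) < dist q p := dist_pos.2 hqp
      set b : X → ℝ := fun r => max 0 (1 - dist r p / dist q p) with hb
      have hb0 : ∀ r, 0 ≤ b r := fun r => le_max_left _ _
      have hb1 : ∀ r, b r ≤ 1 := fun r => by
        have h1 : 0 ≤ dist r p / dist q p := div_nonneg dist_nonneg hdq.le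
        rw [hb]; exact max_le (by linarith) (by linarith)
      have hbp : b p = 1 := by simp [hb]
      have hbq : b q = 0 := by simp [hb, div_self hdq.ne']
      have hbcont : Continuous b := continuous_const.max
        (continuous_const.sub ((continuous_id.dist continuous_const).div_const _))
      set g' : C(X, unitInterval) :=
        ⟨fun r => projIcc 0 1 zero_le_one ((g r : ℝ) + t * b r),
         continuous_projIcc.comp ((continuous_subtype_val.comp g.continuous).add
           (continuous_const.mul hbcont))⟩ with hg'
      have hval : ∀ r, dist (g' r) (g r) ≤ s := by
        intro r
        have h1 : projIcc 0 1 zero_le_one ((g r : ℝ)) = g r := projIcc_val zero_le_one (g r)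
        calc dist (g' r) (g r)
            = dist (projIcc 0 1 zero_le_one ((g r : ℝ) + t * b r))
                (projIcc 0 1 zero_le_one ((g r : ℝ))) := by rw [h1]; rfl
          _ ≤ 1 * dist ((g r : ℝ) + t * b r) ((g r : ℝ)) :=
              (LipschitzWith.projIcc zero_le_one).dist_le_mul _ _
          _ = |t * b r| := by rw [one_mul, Real.dist_eq, add_sub_cancel_left]
          _ ≤ s := by
              rw [abs_mul]
              calc |t| * |b r| ≤ s * 1 := by
                    apply mul_le_mul ht _ (abs_nonneg _) hs0.le
                    rw [abs_of_nonneg (hb0 r)]; exact hb1 r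
                _ = s := mul_one s
      have hg'p : (g' p : ℝ) = (g p : ℝ) + t := by
        show ((projIcc 0 1 zero_le_one ((g p : ℝ) + t * b p) : ↥(Icc (0:ℝ) 1)) : ℝ)
            = (g p : ℝ) + t
        rw [hbp, mul_one, projIcc_of_mem zero_le_one ⟨hb1', hb2'⟩]
      have hg'q : (g' q : ℝ) = (g q : ℝ) := by
        show ((projIcc 0 1 zero_le_one ((g q : ℝ) + t * b q) : ↥(Icc (0:ℝ) 1)) : ℝ)
            = (g q : ℝ)
        rw [hbq, mul_zero, add_zero]
        exact congrArg _ (projIcc_val zero_le_one (g q))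
      have hFp : pF x y g' p = pF x y g p + t * cp := by
        rw [pF, pF, hg'p, hcp]; ring
      have hFq : pF x y g' q = pF x y g q := by
        rw [pF, pF, hg'q]
      refine ⟨g', mem_ball.2 ((ContinuousMap.dist_lt_iff hε).2
        fun r => (hval r).trans_lt hsε), ?_⟩
      simp only [hG, mem_iUnion, mem_setOf_eq]
      exact ⟨p, q, ⟨hpV, hpx, hpy, hqV⟩, by rw [hFp, hFq]; exact hneq⟩
    by_cases hw2 : (g p : ℝ) ≤ 1/2
    · by_cases hc : pF x y g p + s * cp = pF x y g q
      · refine main (s/2) (by rw [abs_of_nonneg (by linarith)]; linarith)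
          (by linarith) (by linarith) ?_
        intro h
        have : (s/2) * cp = s * cp := by linarith
        nlinarith [mul_pos hs0 hcp0]
      · exact main s (by rw [abs_of_nonneg hs0.le]) (by linarith) (by linarith) hc
    · push_neg at hw2
      by_cases hc : pF x y g p + (-s) * cp = pF x y g q
      · refine main (-(s/2)) (by rw [abs_of_nonpos (by linarith)]; linarith)
          (by linarith) (by linarith) ?_
        intro h
        have : (-(s/2)) * cp = (-s) * cp := by linarith
        nlinarith [mul_pos hs0 hcp0]
      · exact main (-s) (by rw [abs_of_nonpos (by linarith)]; linarith) (by linarith) (by linarith) hc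
  have hdense : Dense (⋂ i, G i) := dense_iInter_of_isOpen hGopen hGdense
  obtain ⟨g, hg⟩ := hdense.nonempty
  have hgG : ∀ i, g ∈ G i := mem_iInter.1 hg
  set f : X → unitInterval := fun p => ⟨pF x y g p, pF_mem hxy g p⟩ with hf
  refine ⟨f, (pF_cont hxy g).subtype_mk _, ?_, ?_, ?_⟩
  · ext p
    simp only [hf, mem_preimage, mem_singleton_iff, Subtype.ext_iff]
    rw [show ((0 : unitInterval) : ℝ) = 0 from rfl]
    exact pF_eq_zero hxy g p
  · ext p
    simp only [hf, mem_preimage, mem_singleton_iff, Subtype.ext_iff]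
    rw [show ((1 : unitInterval) : ℝ) = 1 from rfl]
    exact pF_eq_one hxy g p
  · intro U hU hUne
    obtain ⟨u, hu⟩ := hUne
    obtain ⟨δ, hδ0, hδ⟩ := Metric.isOpen_iff.1 hU u hu
    obtain ⟨r, hr0, hr2⟩ := exists_rat_btwn (by linarith : (0:ℝ) < δ/2)
    have hr0' : 0 < r := by exact_mod_cast hr0
    obtain ⟨k, hk⟩ := hd.exists_dist_lt u hr0
    set i : ι := (k, ⟨r, hr0'⟩) with hi
    have hVU : V i ⊆ U := by
      refine subset_trans (connectedComponentIn_subset _ _) ?_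
      intro z hz
      apply hδ
      rw [mem_ball] at hz ⊢
      have h1 : dist z u ≤ dist z (d k) + dist (d k) u := dist_triangle _ _ _
      have h2 : dist (d k) u = dist u (d k) := dist_comm _ _
      calc dist z u ≤ dist z (d k) + dist (d k) u := h1
        _ < (r : ℝ) + (r : ℝ) := by
            apply add_lt_add hz
            rw [h2]; exact hk
        _ ≤ δ := by linarith
    have hgi := hgG i
    simp only [hG, mem_iUnion, mem_setOf_eq] at hgi
    obtain ⟨p, q, ⟨hpV, -, -, hqV⟩, hne⟩ := hgi
    have key : ∀ p' q', p' ∈ V i → q' ∈ V i → pF x y g p' < pF x y g q' →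
        (interior (f '' U)).Nonempty := by
      intro p' q' hp' hq' hlt
      have hIcc : Icc (pF x y g p') (pF x y g q') ⊆ pF x y g '' V i :=
        (hVconn i).intermediate_value hp' hq' (pF_cont hxy g).continuousOn
      have hA0 := (pF_mem hxy g p').1
      have hB1 := (pF_mem hxy g q').2
      set A := pF x y g p' with hA
      set B := pF x y g q' with hB
      have hm01 : (A + B)/2 ∈ Icc (0:ℝ) 1 := ⟨by linarith, by linarith⟩
      refine ⟨⟨(A + B)/2, hm01⟩, mem_interior.2
        ⟨Subtype.val ⁻¹' Ioo A B, ?_, isOpen_Ioo.preimage continuous_subtype_val,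
          by constructor <;> (show _ < _) <;> [skip; skip] <;> simp <;> linarith⟩⟩
      intro z hz
      have hz' : (z : ℝ) ∈ Icc A B := ⟨hz.1.le, hz.2.le⟩
      obtain ⟨v, hv, hveq⟩ := hIcc hz'
      exact ⟨v, hVU hv, Subtype.ext hveq⟩
    rcases lt_or_gt_of_ne hne with h | h
    · exact key p q hpV hqV h
    · exact key q p hqV hpV h
end

section
/- Let X and Y be compact metric spaces and let f : X → Y and g : Y → X be continuous with f surjective. If g ∘ f : X → X is topologically mixing, then f ∘ g : Y → Y is topologically mixing. -/
open Set Topology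

/-- A self-map `T` is topologically mixing if for any two nonempty open sets `U, V`
there is `n₀` such that `Tⁿ(U) ∩ V ≠ ∅` for all `n ≥ n₀`. -/
def TopMixing {Z : Type*} [TopologicalSpace Z] (T : Z → Z) : Prop :=
  ∀ U V : Set Z, IsOpen U → IsOpen V → U.Nonempty → V.Nonempty →
    ∃ n₀ : ℕ, ∀ n ≥ n₀, (T^[n] '' U ∩ V).Nonempty

/-- If `f : X → Y` is a continuous surjection, `g : Y → X` is continuous, and
`g ∘ f` is topologically mixing, then so is `f ∘ g`. -/
theorem mixing_of_comp_swap {X Y : Type*} [MetricSpace X] [CompactSpace X]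
    [MetricSpace Y] [CompactSpace Y] (f : X → Y) (g : Y → X)
    (hf : Continuous f) (hg : Continuous g) (hfs : Function.Surjective f)
    (h : TopMixing (g ∘ f)) : TopMixing (f ∘ g) := by
  intro U V hU hV hUne hVne
  have hsc : Function.Semiconj f (g ∘ f) (f ∘ g) := fun x => rfl
  obtain ⟨n₀, hn₀⟩ := h (f ⁻¹' U) (f ⁻¹' V) (hU.preimage hf) (hV.preimage hf)
    (hUne.preimage hfs) (hVne.preimage hfs)
  refine ⟨n₀, fun n hn => ?_⟩
  obtain ⟨z, ⟨x, hxU, hxz⟩, hzV⟩ := hn₀ n hn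
  exact ⟨f z, ⟨f x, hxU, by rw [← hxz, ← Function.Semiconj.iterate_right hsc n]⟩, hzV⟩
end

section
/- Let X be a compact metric space and T : X → X continuous. Then T is topologically mixing if and only if for every nonempty open set U ⊆ X, the sequence of closures of Tⁿ(U) converges to X in the Hausdorff metric. -/
open Set Metric Filter Topology

/-!
Both conditions say that the images `Tⁿ(U)` eventually become `ε`-dense for every `ε > 0`.
Since `Tⁿ(U)` and its closure are at the same Hausdorff distance from `X`, and that distance is
the supremum of `infDist y (Tⁿ(U))` over `y ∈ X`, Hausdorff convergence to `X` is exactly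
eventual `ε`-density. Eventual `ε`-density implies eventually meeting every ball, hence every
open set; conversely, meeting each ball of a finite `ε/2`-net makes a set `ε`-dense, which is
where compactness enters.
-/

theorem topMixing_iff_forall_eventually {Z : Type*} [TopologicalSpace Z] (T : Z → Z) :
    TopMixing T ↔ ∀ U : Set Z, IsOpen U → U.Nonempty →
      ∀ V : Set Z, IsOpen V → V.Nonempty →
        ∀ᶠ n in atTop, (T^[n] '' U ∩ V).Nonempty := by
  simp only [TopMixing, eventually_atTop]
  exact ⟨fun h U hU hUne V hV hVne => h U V hU hV hUne hVne,
    fun h U V hU hV hUne hVne => h U hU hUne V hV hVne⟩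

namespace Metric

variable {X : Type*} [PseudoMetricSpace X] {ι : Type*} {l : Filter ι}

theorem hausdorffDist_univ_le_of_thickening_eq_univ {S : Set X} {ε : ℝ} (hε : 0 ≤ ε)
    (h : thickening ε S = univ) : hausdorffDist S univ ≤ ε := by
  refine hausdorffDist_le_of_infDist hε
    (fun x _ => (infDist_zero_of_mem (mem_univ x)).trans_le hε) fun y _ => ?_
  obtain ⟨z, hz, hyz⟩ := mem_thickening_iff.1 (h ▸ mem_univ y)
  exact (infDist_le_dist_of_mem hz).trans hyz.le

theorem thickening_eq_univ_of_hausdorffDist_univ_lt [BoundedSpace X] {S : Set X} {ε : ℝ}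
    (hS : S.Nonempty) (h : hausdorffDist S univ < ε) : thickening ε S = univ := by
  refine eq_univ_of_forall fun y => mem_thickening_iff.2 ((infDist_lt_iff hS).1 ?_)
  have hfin : hausdorffEDist univ S ≠ ⊤ :=
    hausdorffEDist_ne_top_of_nonempty_of_bounded ⟨y, mem_univ y⟩ hS
      BoundedSpace.bounded_univ (BoundedSpace.bounded_univ.subset (subset_univ S))
  calc infDist y S ≤ hausdorffDist univ S := infDist_le_hausdorffDist_of_mem (mem_univ y) hfin
    _ = hausdorffDist S univ := hausdorffDist_comm
    _ < ε := h

theorem tendsto_hausdorffDist_univ_zero_iff [BoundedSpace X] {S : ι → Set X}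
    (hS : ∀ i, (S i).Nonempty) :
    Tendsto (fun i => hausdorffDist (S i) univ) l (𝓝 0) ↔
      ∀ ε > 0, ∀ᶠ i in l, thickening ε (S i) = univ := by
  simp only [Metric.tendsto_nhds, Real.dist_0_eq_abs, abs_of_nonneg hausdorffDist_nonneg]
  constructor
  · intro h ε hε
    filter_upwards [h ε hε] with i hi
    exact thickening_eq_univ_of_hausdorffDist_univ_lt (hS i) hi
  · intro h ε hε
    filter_upwards [h (ε / 2) (half_pos hε)] with i hi
    exact (hausdorffDist_univ_le_of_thickening_eq_univ (half_pos hε).le hi).trans_lt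
      (half_lt_self hε)

theorem eventually_inter_nonempty_iff_eventually_thickening_eq_univ
    (hX : TotallyBounded (univ : Set X)) {S : ι → Set X} :
    (∀ V : Set X, IsOpen V → V.Nonempty → ∀ᶠ i in l, (S i ∩ V).Nonempty) ↔
      ∀ ε > 0, ∀ᶠ i in l, thickening ε (S i) = univ := by
  constructor
  · intro h ε hε
    obtain ⟨t, ht, hcover⟩ := totallyBounded_iff.1 hX (ε / 2) (half_pos hε)
    have hnet : ∀ᶠ i in l, ∀ x ∈ t, (S i ∩ ball x (ε / 2)).Nonempty :=
      (eventually_all_finite ht).2 fun x _ =>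
        h _ isOpen_ball (nonempty_ball.2 (half_pos hε))
    filter_upwards [hnet] with i hi
    refine eq_univ_of_forall fun y => ?_
    obtain ⟨x, hxt, hyx⟩ := mem_iUnion₂.1 (hcover (mem_univ y))
    obtain ⟨z, hz, hzx⟩ := hi x hxt
    refine mem_thickening_iff.2 ⟨z, hz, ?_⟩
    calc dist y z ≤ dist y x + dist z x := dist_triangle_right y z x
      _ < ε / 2 + ε / 2 := add_lt_add hyx hzx
      _ = ε := add_halves ε
  · rintro h V hV ⟨v, hv⟩
    obtain ⟨r, hr, hball⟩ := Metric.isOpen_iff.1 hV v hv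
    filter_upwards [h r hr] with i hi
    obtain ⟨z, hz, hvz⟩ := mem_thickening_iff.1 (hi ▸ mem_univ v)
    exact ⟨z, hz, hball (mem_ball'.2 hvz)⟩

end Metric

theorem mixing_iff_hausdorff_convergence_general {X : Type*} [MetricSpace X] [CompactSpace X]
    (T : X → X) :
    TopMixing T ↔ ∀ U : Set X, IsOpen U → U.Nonempty →
      Tendsto (fun n : ℕ => hausdorffDist (closure (T^[n] '' U)) (univ : Set X))
        atTop (𝓝 0) := by
  simp only [topMixing_iff_forall_eventually, hausdorffDist_closure₁]
  refine forall₃_congr fun U _ hU => ?_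
  rw [tendsto_hausdorffDist_univ_zero_iff fun n => hU.image _]
  exact eventually_inter_nonempty_iff_eventually_thickening_eq_univ
    isCompact_univ.totallyBounded

/-- `T` is topologically mixing iff for every nonempty open `U` the closures of the
iterated images `Tⁿ(U)` converge to `X` in the Hausdorff metric. -/
theorem mixing_iff_hausdorff_convergence {X : Type*} [MetricSpace X] [CompactSpace X]
    (T : X → X) (hT : Continuous T) :
    TopMixing T ↔ ∀ U : Set X, IsOpen U → U.Nonempty →
      Tendsto (fun n : ℕ => hausdorffDist (closure (T^[n] '' U)) (univ : Set X))
        atTop (𝓝 0) :=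
  mixing_iff_hausdorff_convergence_general T
end

section
/- For any compact metric spaces X, Y and continuous maps f : X → Y and g : Y → X, the topological entropy of f ∘ g : Y → Y equals the topological entropy of g ∘ f : X → X. -/
open Set Metric Filter Topology

/-- A set `E` is `(n, ε)`-separated for `T` if any two distinct points of `E` are
`ε`-separated along the first `n` iterates. -/
def IsDynSeparated {X : Type*} [MetricSpace X] (T : X → X) (n : ℕ) (ε : ℝ)
    (E : Set X) : Prop :=
  E.Pairwise fun a b => ∃ i ≤ n, ε ≤ dist (T^[i] a) (T^[i] b)

/-- The maximal cardinality of an `(n, ε)`-separated set. -/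
noncomputable def maxSep {X : Type*} [MetricSpace X] (T : X → X) (n : ℕ) (ε : ℝ) : ℕ :=
  sSup {k : ℕ | ∃ E : Finset X, IsDynSeparated T n ε (E : Set X) ∧ E.card = k}

/-- Topological entropy via separated sets:
`h_top(T) = lim_{ε→0} limsup_{n→∞} (1/n) log s(n, ε)`. -/
noncomputable def topEnt {X : Type*} [MetricSpace X] (T : X → X) : EReal :=
  ⨆ (ε : ℝ) (_ : 0 < ε),
    Filter.atTop.limsup fun n : ℕ => ((Real.log (maxSep T n ε) / n : ℝ) : EReal)

/-! Since `(f ∘ g)^[i + 1] = f ∘ (g ∘ f)^[i] ∘ g`, a point `y` of an `(n, ε)`-separated set of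
`f ∘ g` is pinned down, up to the separation, by a point of a finite `ε/2`-net near `y` together
with a point of a maximal `(n, δ)`-separated set of `g ∘ f` shadowing the orbit of `g y`, where
`δ` is a modulus of uniform continuity of `f` for `ε/2`. Hence `s_{f∘g}(n, ε) ≤ C · s_{g∘f}(n, δ)`
with `C` the size of the net, so `h(f ∘ g) ≤ h(g ∘ f)`; the reverse inequality is symmetric. -/

lemma exists_finset_map_dist_lt_of_eq {Z : Type*} [MetricSpace Z] [CompactSpace Z] {ε : ℝ}
    (hε : 0 < ε) :
    ∃ (s : Finset Z) (q : Z → Z), (∀ z, q z ∈ s) ∧ ∀ a b, q a = q b → dist a b < ε := by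
  obtain ⟨t, -, ht, hcov⟩ := finite_cover_balls_of_compact (isCompact_univ (X := Z)) (half_pos hε)
  have hnet : ∀ z : Z, ∃ c ∈ t, dist z c < ε / 2 := fun z => by simpa using hcov (mem_univ z)
  choose q hqt hq using hnet
  refine ⟨ht.toFinset, q, fun z => ht.mem_toFinset.2 (hqt z), fun a b hab => ?_⟩
  have hb := hq b
  rw [← hab] at hb
  linarith [dist_triangle_right a b (q a), hq a]

lemma Function.iterate_comp_succ_apply {X Y : Type*} (f : X → Y) (g : Y → X) (n : ℕ)
    (y : Y) : (f ∘ g)^[n + 1] y = f ((g ∘ f)^[n] (g y)) := by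
  have hsemi : Function.Semiconj f (g ∘ f) (f ∘ g) := fun _ => rfl
  rw [Function.iterate_succ_apply]
  exact (hsemi.iterate_right n (g y)).symm

namespace IsDynSeparated

variable {X : Type*} [MetricSpace X] {T : X → X} {n : ℕ} {ε : ℝ}

lemma card_le_of_map {E : Finset X} (hE : IsDynSeparated T n ε (E : Set X)) {ι : Type*}
    (s : Finset ι) (φ : X → ι) (hφs : ∀ x, φ x ∈ s)
    (hφ : ∀ a b, φ a = φ b → ∀ i ≤ n, dist (T^[i] a) (T^[i] b) < ε) : E.card ≤ s.card := by
  refine Finset.card_le_card_of_injOn φ (fun a _ => hφs a) fun a ha b hb hab => ?_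
  by_contra hne
  obtain ⟨i, hi, hd⟩ := hE ha hb hne
  exact (hφ a b hab i hi).not_ge hd

end IsDynSeparated

section maxSep

variable {X : Type*} [MetricSpace X] [CompactSpace X] (T : X → X) (n : ℕ) {ε : ℝ}

lemma bddAbove_card_isDynSeparated (hε : 0 < ε) :
    BddAbove {k : ℕ | ∃ E : Finset X, IsDynSeparated T n ε (E : Set X) ∧ E.card = k} := by
  obtain ⟨s, q, hqs, hq⟩ := exists_finset_map_dist_lt_of_eq (Z := Fin (n + 1) → X) hε
  refine ⟨s.card, ?_⟩
  rintro k ⟨E, hE, rfl⟩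
  refine hE.card_le_of_map s (fun a => q fun i => T^[i] a) (fun a => hqs _) fun a b hab i hi => ?_
  exact (dist_pi_lt_iff hε).1 (hq _ _ hab) ⟨i, Nat.lt_succ_of_le hi⟩

variable {T n}

lemma card_le_maxSep (hε : 0 < ε) {E : Finset X} (hE : IsDynSeparated T n ε (E : Set X)) :
    E.card ≤ maxSep T n ε :=
  le_csSup (bddAbove_card_isDynSeparated T n hε) ⟨E, hE, rfl⟩

lemma exists_isDynSeparated_card_eq_maxSep (hε : 0 < ε) :
    ∃ E : Finset X, IsDynSeparated T n ε (E : Set X) ∧ E.card = maxSep T n ε := by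
  have hne : {k : ℕ | ∃ E : Finset X, IsDynSeparated T n ε (E : Set X) ∧ E.card = k}.Nonempty :=
    ⟨0, ∅, by simp [IsDynSeparated]⟩
  exact Nat.sSup_mem hne (bddAbove_card_isDynSeparated T n hε)

/-- A separated set of maximal size is spanning: otherwise a point could be added to it. -/
lemma IsDynSeparated.exists_dist_lt_of_card_eq_maxSep (hε : 0 < ε) {F : Finset X}
    (hF : IsDynSeparated T n ε (F : Set X)) (hmax : F.card = maxSep T n ε) (x : X) :
    ∃ z ∈ F, ∀ j ≤ n, dist (T^[j] x) (T^[j] z) < ε := by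
  classical
  by_contra! hfar
  have hx : x ∉ F := fun hx => by
    obtain ⟨j, -, hd⟩ := hfar x hx
    rw [dist_self] at hd
    linarith
  have hins : IsDynSeparated T n ε ((insert x F : Finset X) : Set X) := by
    rw [Finset.coe_insert]
    refine hF.insert fun b hb _ => ?_
    obtain ⟨j, hj, hd⟩ := hfar b hb
    exact ⟨⟨j, hj, hd⟩, j, hj, by rwa [dist_comm]⟩
  have := card_le_maxSep hε hins
  rw [Finset.card_insert_of_notMem hx, hmax] at this
  omega

end maxSep

lemma maxSep_comp_le_mul {X Y : Type*} [MetricSpace X] [CompactSpace X] [MetricSpace Y]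
    [CompactSpace Y] {f : X → Y} (g : Y → X) (hf : Continuous f) {ε : ℝ} (hε : 0 < ε) :
    ∃ δ > 0, ∃ C : ℕ, ∀ n, maxSep (f ∘ g) n ε ≤ C * maxSep (g ∘ f) n δ := by
  obtain ⟨δ, hδ, hfδ⟩ := Metric.uniformContinuous_iff.1
    (CompactSpace.uniformContinuous_of_continuous hf) (ε / 2) (half_pos hε)
  obtain ⟨s, q, hqs, hq⟩ := exists_finset_map_dist_lt_of_eq (Z := Y) hε
  refine ⟨δ, hδ, s.card, fun n => ?_⟩
  obtain ⟨F, hF, hFcard⟩ := exists_isDynSeparated_card_eq_maxSep (T := g ∘ f) (n := n) hδ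
  choose z hzF hz using hF.exists_dist_lt_of_card_eq_maxSep hδ hFcard
  obtain ⟨E, hE, hEcard⟩ := exists_isDynSeparated_card_eq_maxSep (T := f ∘ g) (n := n) hε
  rw [← hEcard, ← hFcard, ← Finset.card_product]
  refine hE.card_le_of_map (s ×ˢ F) (fun y => (q y, z (g y)))
    (fun y => Finset.mem_product.2 ⟨hqs y, hzF _⟩) ?_
  rintro a b hab (_ | i) hi
  · exact hq a b (congrArg Prod.fst hab)
  · have hzab : z (g a) = z (g b) := congrArg Prod.snd hab
    rw [Function.iterate_comp_succ_apply, Function.iterate_comp_succ_apply]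
    have ha := hfδ (hz (g a) i (by omega))
    have hb := hfδ (hz (g b) i (by omega))
    rw [hzab] at ha
    linarith [dist_triangle_right (f ((g ∘ f)^[i] (g a))) (f ((g ∘ f)^[i] (g b)))
      (f ((g ∘ f)^[i] (z (g b))))]

lemma Real.log_natCast_le_add_of_le_mul {a b C : ℕ} (h : a ≤ C * b) :
    Real.log a ≤ Real.log C + Real.log b := by
  rcases Nat.eq_zero_or_pos a with rfl | ha
  · simpa using add_nonneg (Real.log_natCast_nonneg C) (Real.log_natCast_nonneg b)
  · obtain ⟨hC, hb⟩ := CanonicallyOrderedAdd.mul_pos.1 (ha.trans_le h)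
    rw [← Real.log_mul (by positivity) (by positivity)]
    exact Real.log_le_log (by exact_mod_cast ha) (by exact_mod_cast h)

lemma limsup_log_div_le_of_le_mul {a b : ℕ → ℕ} (C : ℕ) (h : ∀ᶠ n in atTop, a n ≤ C * b n) :
    atTop.limsup (fun n : ℕ => ((Real.log (a n) / n : ℝ) : EReal)) ≤
      atTop.limsup fun n : ℕ => ((Real.log (b n) / n : ℝ) : EReal) := by
  set u : ℕ → EReal := fun n => ((Real.log C / n : ℝ) : EReal)
  have hu : atTop.limsup u = 0 := by
    have : Tendsto u atTop (𝓝 ((0 : ℝ) : EReal)) :=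
      (continuous_coe_real_ereal.tendsto 0).comp (tendsto_const_div_atTop_nhds_zero_nat _)
    simpa using this.limsup_eq
  calc atTop.limsup (fun n : ℕ => ((Real.log (a n) / n : ℝ) : EReal))
      ≤ atTop.limsup (u + fun n : ℕ => ((Real.log (b n) / n : ℝ) : EReal)) := by
        refine limsup_le_limsup (h.mono fun n hn => ?_)
        simp only [Pi.add_apply, u]
        rw [← EReal.coe_add, EReal.coe_le_coe_iff, ← add_div]
        exact div_le_div_of_nonneg_right (Real.log_natCast_le_add_of_le_mul hn) n.cast_nonneg
    _ ≤ atTop.limsup u + atTop.limsup fun n : ℕ => ((Real.log (b n) / n : ℝ) : EReal) :=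
        EReal.limsup_add_le (Or.inl (by simp [hu])) (Or.inl (by simp [hu]))
    _ = _ := by rw [hu, zero_add]

lemma topEnt_le_of_maxSep_le_mul {X Y : Type*} [MetricSpace X] [MetricSpace Y] {T : X → X}
    {S : Y → Y} (h : ∀ ε > 0, ∃ δ > 0, ∃ C : ℕ, ∀ᶠ n in atTop, maxSep T n ε ≤ C * maxSep S n δ) :
    topEnt T ≤ topEnt S :=
  iSup₂_le fun ε hε => by
    obtain ⟨δ, hδ, C, hC⟩ := h ε hε
    exact (limsup_log_div_le_of_le_mul C hC).trans (le_iSup₂_of_le δ hδ le_rfl)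

lemma topEnt_comp_le {X Y : Type*} [MetricSpace X] [CompactSpace X] [MetricSpace Y]
    [CompactSpace Y] {f : X → Y} (g : Y → X) (hf : Continuous f) :
    topEnt (f ∘ g) ≤ topEnt (g ∘ f) :=
  topEnt_le_of_maxSep_le_mul fun _ hε =>
    let ⟨δ, hδ, C, hC⟩ := maxSep_comp_le_mul g hf hε
    ⟨δ, hδ, C, Eventually.of_forall hC⟩

/-- The topological entropy of `f ∘ g` equals that of `g ∘ f`. -/
theorem topEnt_comp_comm {X Y : Type*} [MetricSpace X] [CompactSpace X]
    [MetricSpace Y] [CompactSpace Y] (f : X → Y) (g : Y → X)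
    (hf : Continuous f) (hg : Continuous g) :
    topEnt (f ∘ g) = topEnt (g ∘ f) :=
  le_antisymm (topEnt_comp_le g hf) (topEnt_comp_le f hg)
end

section
/- Let X be a metric space and A ⊆ X a subset with property S. Then the closure of A also has property S. -/
open Set Metric Topology

/-- A subset `Y` of a metric space has property S if for every `ε > 0` it can be
covered by finitely many connected subsets of `Y` of diameter less than `ε`. -/
def PropertyS {X : Type*} [MetricSpace X] (Y : Set X) : Prop :=
  ∀ ε : ℝ, 0 < ε → ∃ F : Finset (Set X),
    (∀ s ∈ F, s ⊆ Y ∧ IsPreconnected s ∧ diam s < ε) ∧ Y ⊆ ⋃₀ (F : Set (Set X))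

/-- The closure of a set with property S has property S. -/
theorem propertyS_closure {X : Type*} [MetricSpace X] (A : Set X)
    (hA : PropertyS A) : PropertyS (closure A) := by
  classical
  intro ε hε
  obtain ⟨F, hF, hcov⟩ := hA ε hε
  refine ⟨F.image closure, ?_, ?_⟩
  · intro t ht
    simp only [Finset.mem_image] at ht
    obtain ⟨s, hs, rfl⟩ := ht
    obtain ⟨h1, h2, h3⟩ := hF s hs
    exact ⟨closure_mono h1, h2.closure, by rwa [diam_closure]⟩
  · intro x hx
    have : closure A ⊆ closure (⋃₀ (F : Set (Set X))) := closure_mono hcov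
    have hx' := this hx
    rw [F.finite_toSet.closure_sUnion] at hx'
    simp only [mem_iUnion, exists_prop] at hx'
    obtain ⟨s, hs, hxs⟩ := hx'
    exact ⟨closure s, by simp [Finset.mem_image]; exact ⟨s, hs, rfl⟩, hxs⟩
end
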